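/- arXiv:1405.3721 — 6 statements merged into one kernel-verified Lean document; each statement's English description precedes it below -/
import Mathlib

section
/- Let d > 1 and let F ∈ ℂ[x_0,…,x_n] and G ∈ ℂ[y_0,…,y_m] be non-zero homogeneous polynomials of degree d in disjoint sets of variables. Suppose G essentially involves rk(G) variables, i.e. G = L_1^d + ⋯ + L_s^d where s = rk(G) and L_1,…,L_s are linearly independent linear forms in y_0,…,y_m. Then rk(F + G) = rk(F) + rk(G). -/
open MvPolynomial

/-- The Waring rank of a form `P` of degree `d`: the least `r` such that
`P = L₁^d + ⋯ + L_r^d` for some linear forms `L i`. -/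
noncomputable def waringRank {σ : Type*} (d : ℕ) (P : MvPolynomial σ ℂ) : ℕ :=
  sInf {r : ℕ | ∃ L : Fin r → MvPolynomial σ ℂ,
    (∀ i, (L i).IsHomogeneous 1) ∧ P = ∑ i, (L i) ^ d}

/-!
Every form of degree `d` is a sum of `d`-th powers of linear forms (the coefficient of `t` in
`(u + t v)ⁿ` shows that the span of the powers contains every monomial), so the rank is attained,
and `rk(F + G) ≤ rk F + rk G` is clear. For the converse, a linear substitution fixing the `x`'s
and sending each `Lᵢ` to a new variable `zᵢ` turns `F + G` into `F + z₁ᵈ + ⋯ + z_sᵈ` without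
raising the rank, so it suffices to peel off one `yᵈ`. Let `P + yᵈ = ∑ₖ Mₖᵈ` with `y` not in `P`
and write `Mₖ = Aₖ + bₖ y`; substituting any `ℓ` for `y` gives `P + ℓᵈ = ∑ₖ (Aₖ + bₖ ℓ)ᵈ`, and
some `bₖ` is nonzero. If `b_K` and `b_J` both are, choose `ℓ` with
`A_K + b_K ℓ = ω (A_J + b_J ℓ)`, `ωᵈ = -1`: those two terms cancel and
`P = ∑_{k ≠ K, J} (Aₖ + bₖ ℓ)ᵈ + (ω ℓ)ᵈ`. If only `b_K` is, comparing `ℓ = 0` with `ℓ = ω A_K`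
forces `A_K = 0`, and `P = ∑_{k ≠ K} Aₖᵈ`.
-/

lemma Submodule.mem_of_forall_sum_smul_pow_mem {K V : Type*} [Field K] [Infinite K]
    [AddCommGroup V] [Module K V] (W : Submodule K V) {n : ℕ} {m : ℕ → V}
    (h : ∀ t : K, ∑ p ∈ Finset.range n, t ^ p • m p ∈ W) {p : ℕ} (hp : p < n) : m p ∈ W := by
  rw [← Submodule.Quotient.mk_eq_zero, ← Module.forall_dual_apply_eq_zero_iff K]
  intro f
  have hQ : ∑ q ∈ Finset.range n, Polynomial.C (f (W.mkQ (m q))) * Polynomial.X ^ q = 0 := by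
    refine Polynomial.funext fun t => ?_
    have : f (W.mkQ (∑ p ∈ Finset.range n, t ^ p • m p)) = 0 := by
      rw [W.mkQ_apply, (Submodule.Quotient.mk_eq_zero W).2 (h t), map_zero]
    simp only [map_sum, map_smul, smul_eq_mul] at this
    simp only [Polynomial.eval_finsetSum, Polynomial.eval_mul, Polynomial.eval_C,
      Polynomial.eval_pow, Polynomial.eval_X, Polynomial.eval_zero, ← this, mul_comm]
  simpa [Polynomial.finsetSum_coeff, Polynomial.coeff_C_mul_X_pow, hp] using
    congrArg (·.coeff p) hQ

lemma Submodule.pow_pred_mul_mem_of_forall_add_smul_pow_mul_mem {K A : Type*} [Field K]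
    [CharZero K] [CommRing A] [Algebra K A] (W : Submodule K A) {n : ℕ} (hn : n ≠ 0)
    {u v Q : A} (h : ∀ t : K, (t • v + u) ^ n * Q ∈ W) : u ^ (n - 1) * v * Q ∈ W := by
  have hexp : ∀ t : K, (t • v + u) ^ n * Q =
      ∑ p ∈ Finset.range (n + 1), t ^ p • (v ^ p * u ^ (n - p) * (n.choose p : A) * Q) := by
    intro t
    simp only [add_pow, Finset.sum_mul, smul_pow, smul_mul_assoc]
  have h1 := W.mem_of_forall_sum_smul_pow_mem (fun t => hexp t ▸ h t) (p := 1) (by omega)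
  convert W.smul_mem (n : K)⁻¹ h1 using 1
  calc u ^ (n - 1) * v * Q = algebraMap K A ((n : K)⁻¹ * n) * (u ^ (n - 1) * v * Q) := by
        rw [inv_mul_cancel₀ (Nat.cast_ne_zero.2 hn), map_one, one_mul]
    _ = _ := by rw [Algebra.smul_def, map_mul, map_natCast, Nat.choose_one_right]; ring

namespace MvPolynomial

lemma linearMap_eq_of_isHomogeneous_one {R σ M : Type*} [CommSemiring R] [AddCommMonoid M]
    [Module R M] {f g : MvPolynomial σ R →ₗ[R] M} (h : ∀ v, f (X v) = g (X v))
    {p : MvPolynomial σ R} (hp : p.IsHomogeneous 1) : f p = g p := by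
  rw [← mem_homogeneousSubmodule, homogeneousSubmodule_one_eq_span_X] at hp
  exact LinearMap.eqOn_span' (by rintro _ ⟨v, rfl⟩; exact h v) hp

lemma exists_algHom_map_eq_X_of_linearIndependent {K σ ι : Type*} [Field K]
    {L : ι → MvPolynomial σ K} (hL1 : ∀ i, (L i).IsHomogeneous 1) (hL : LinearIndependent K L) :
    ∃ θ : MvPolynomial σ K →ₐ[K] MvPolynomial ι K,
      (∀ v, (θ (X v)).IsHomogeneous 1) ∧ ∀ i, θ (L i) = X i := by
  obtain ⟨g, hg⟩ := LinearMap.exists_extend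
    (Finsupp.linearCombination K (X : ι → MvPolynomial ι K) ∘ₗ hL.repr)
  refine ⟨aeval fun v => homogeneousComponent 1 (g (X v)),
    fun v => by simpa using (homogeneousComponent_isHomogeneous 1 (g (X v)) :), fun i => ?_⟩
  have hgL : g (L i) = X i := by
    have := LinearMap.congr_fun hg ⟨L i, Submodule.subset_span ⟨i, rfl⟩⟩
    simpa [hL.repr_eq_single i ⟨L i, _⟩ rfl] using this
  have := linearMap_eq_of_isHomogeneous_one
    (f := (aeval fun v => homogeneousComponent 1 (g (X v))).toLinearMap)
    (g := homogeneousComponent 1 ∘ₗ g) (fun v => by simp) (hL1 i)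
  simpa [hgL, homogeneousComponent_eq_self (isHomogeneous_X K i)] using this

lemma aeval_update_X_of_notMem_vars {R σ : Type*} [CommSemiring R] [DecidableEq σ] {y : σ}
    {P : MvPolynomial σ R} (hy : y ∉ P.vars) (ℓ : MvPolynomial σ R) :
    aeval (Function.update X y ℓ) P = P := by
  refine hom_congr_vars (f₂ := RingHom.id _) (by ext; simp) (fun v hv _ => ?_) rfl
  simp [Function.update_of_ne (ne_of_mem_of_not_mem hv hy)]

lemma aeval_update_X_of_isHomogeneous_one {R σ : Type*} [CommSemiring R] [DecidableEq σ] (y : σ)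
    {M : MvPolynomial σ R} (hM : M.IsHomogeneous 1) (ℓ : MvPolynomial σ R) :
    aeval (Function.update X y ℓ) M =
      aeval (Function.update X y 0) M + coeff (Finsupp.single y 1) M • ℓ := by
  refine linearMap_eq_of_isHomogeneous_one (f := (aeval _).toLinearMap)
    (g := (aeval _).toLinearMap + (lcoeff R (Finsupp.single y 1)).smulRight ℓ) (fun v => ?_) hM
  rcases eq_or_ne v y with rfl | hv
  · simp
  · simp [coeff_X, Finsupp.single_left_inj one_ne_zero, hv]


lemma homogeneousSubmodule_le_span_pow {K σ : Type*} [Field K] [CharZero K] (d : ℕ) :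
    homogeneousSubmodule σ K d ≤
      Submodule.span K ((· ^ d) '' {ℓ : MvPolynomial σ K | ℓ.IsHomogeneous 1}) := by
  classical
  set W := Submodule.span K ((· ^ d) '' {ℓ : MvPolynomial σ K | ℓ.IsHomogeneous 1})
  have key : ∀ s : Multiset σ, Multiset.card s ≤ d → ∀ u : MvPolynomial σ K, u.IsHomogeneous 1 →
      u ^ (d - Multiset.card s) * monomial (Multiset.toFinsupp s) 1 ∈ W := by
    intro s
    induction s using Multiset.induction_on with
    | empty => intro _ u hu; simpa using Submodule.subset_span (Set.mem_image_of_mem _ hu)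
    | cons a s ih =>
      intro hs u hu
      rw [Multiset.card_cons] at hs
      have := W.pow_pred_mul_mem_of_forall_add_smul_pow_mul_mem (by omega : d - Multiset.card s ≠ 0)
        (u := u) (v := X a) fun t => ih (by omega) _
          (by simpa [smul_eq_C_mul] using ((isHomogeneous_X K a).C_mul t).add hu)
      convert this using 1
      rw [Multiset.card_cons, ← Multiset.singleton_add, Multiset.toFinsupp_add,
        Multiset.toFinsupp_singleton, ← mul_one (1 : K), ← monomial_mul, ← X, Nat.sub_add_eq,
        mul_one, mul_assoc]
  rw [homogeneousSubmodule_eq_finsupp_supported, AddMonoidAlgebra.supported_eq_span_single,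
    Submodule.span_le]
  rintro _ ⟨α, hα, rfl⟩
  have hcard : Multiset.card (Finsupp.toMultiset α) = d := by
    rw [Finsupp.card_toMultiset]; exact hα
  have := key (Finsupp.toMultiset α) hcard.le 0 (isHomogeneous_zero _ _ _)
  rwa [hcard, Nat.sub_self, pow_zero, one_mul, Finsupp.toMultiset_toFinsupp] at this

end MvPolynomial

lemma Complex.exists_pow_eq_neg_one_ne {d : ℕ} (hd : 2 ≤ d) (c : ℂ) :
    ∃ ω : ℂ, ω ^ d = -1 ∧ ω ≠ c := by
  by_cases hc : c ^ d = -1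
  · have hζ := Complex.isPrimitiveRoot_exp d (by omega)
    have hc0 : c ≠ 0 := by rintro rfl; simp [zero_pow (by omega : d ≠ 0)] at hc
    refine ⟨Complex.exp (2 * Real.pi * Complex.I / d) * c,
      by rw [mul_pow, hζ.pow_eq_one, one_mul, hc],
      fun h => hζ.ne_one hd (mul_right_cancel₀ hc0 (h.trans (one_mul c).symm))⟩
  · obtain ⟨ω, hω⟩ := IsAlgClosed.exists_pow_nat_eq (-1 : ℂ) (by omega : 0 < d)
    exact ⟨ω, hω, by rintro rfl; exact hc hω⟩

-- A multiset rather than a `Fin r`-indexed family, so that terms can be dropped one at a time.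
def HasWaringDecomp {σ : Type*} (d : ℕ) (P : MvPolynomial σ ℂ) (r : ℕ) : Prop :=
  ∃ m : Multiset (MvPolynomial σ ℂ), Multiset.card m = r ∧
    (∀ ℓ ∈ m, ℓ.IsHomogeneous 1) ∧ P = (m.map (· ^ d)).sum

section WaringDecomp

variable {σ τ : Type*} {d r : ℕ}

lemma hasWaringDecomp_sum_pow {ι : Type*} [Fintype ι] {L : ι → MvPolynomial σ ℂ}
    (hL : ∀ i, (L i).IsHomogeneous 1) : HasWaringDecomp d (∑ i, L i ^ d) (Fintype.card ι) :=
  ⟨Finset.univ.val.map L, by simp, by simpa using hL, by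
    rw [Finset.sum_eq_multiset_sum, Multiset.map_map]; rfl⟩

lemma hasWaringDecomp_iff_exists_fin {P : MvPolynomial σ ℂ} :
    HasWaringDecomp d P r ↔
      ∃ L : Fin r → MvPolynomial σ ℂ, (∀ i, (L i).IsHomogeneous 1) ∧ P = ∑ i, L i ^ d := by
  constructor
  · rintro ⟨⟨l⟩, rfl, hl, rfl⟩
    exact ⟨fun i => l[i.1], fun i => hl _ (List.getElem_mem _),
      (Fin.sum_univ_fun_getElem l (· ^ d)).symm⟩
  · rintro ⟨L, hL, rfl⟩
    simpa using hasWaringDecomp_sum_pow (d := d) hL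

lemma waringRank_eq_sInf (P : MvPolynomial σ ℂ) :
    waringRank d P = sInf {r | HasWaringDecomp d P r} := by
  simp only [waringRank, hasWaringDecomp_iff_exists_fin]

lemma HasWaringDecomp.waringRank_le {P : MvPolynomial σ ℂ} (h : HasWaringDecomp d P r) :
    waringRank d P ≤ r :=
  (waringRank_eq_sInf P).trans_le (Nat.sInf_le h)

lemma HasWaringDecomp.waringRank {P : MvPolynomial σ ℂ} (h : HasWaringDecomp d P r) :
    HasWaringDecomp d P (waringRank d P) := by
  rw [waringRank_eq_sInf]
  exact Nat.sInf_mem (s := {r | HasWaringDecomp d P r}) ⟨r, h⟩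

lemma HasWaringDecomp.add {P Q : MvPolynomial σ ℂ} {s : ℕ} (hP : HasWaringDecomp d P r)
    (hQ : HasWaringDecomp d Q s) : HasWaringDecomp d (P + Q) (r + s) := by
  obtain ⟨m, rfl, hm, rfl⟩ := hP
  obtain ⟨n, rfl, hn, rfl⟩ := hQ
  refine ⟨m + n, by simp, fun ℓ hℓ => ?_, by simp⟩
  rcases Multiset.mem_add.1 hℓ with h | h
  exacts [hm ℓ h, hn ℓ h]

lemma HasWaringDecomp.smul (hd : d ≠ 0) {P : MvPolynomial σ ℂ} (h : HasWaringDecomp d P r)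
    (c : ℂ) : HasWaringDecomp d (c • P) r := by
  obtain ⟨z, rfl⟩ := IsAlgClosed.exists_pow_nat_eq c (Nat.pos_of_ne_zero hd)
  obtain ⟨m, rfl, hm, rfl⟩ := h
  refine ⟨m.map (z • ·), by simp, ?_, ?_⟩
  · simp only [Multiset.mem_map, forall_exists_index, and_imp]
    rintro _ ℓ hℓ rfl
    simpa [smul_eq_C_mul] using (hm ℓ hℓ).C_mul z
  · simp [Multiset.smul_sum, Multiset.map_map, smul_pow]

lemma HasWaringDecomp.map {P : MvPolynomial σ ℂ} (h : HasWaringDecomp d P r)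
    (φ : MvPolynomial σ ℂ →ₐ[ℂ] MvPolynomial τ ℂ) (hφ : ∀ v, (φ (X v)).IsHomogeneous 1) :
    HasWaringDecomp d (φ P) r := by
  obtain ⟨m, rfl, hm, rfl⟩ := h
  refine ⟨m.map φ, by simp, ?_, by simp [map_multiset_sum, Multiset.map_map]⟩
  simp only [Multiset.mem_map, forall_exists_index, and_imp]
  rintro _ ℓ hℓ rfl
  rw [aeval_unique φ]
  simpa using (hm ℓ hℓ).aeval (φ ∘ X) hφ

lemma HasWaringDecomp.rename {P : MvPolynomial σ ℂ}
    (h : HasWaringDecomp d P r) (f : σ → τ) : HasWaringDecomp d (MvPolynomial.rename f P) r :=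
  h.map (MvPolynomial.rename f) fun v => by simpa using isHomogeneous_X ℂ (f v)

lemma HasWaringDecomp.of_rename {P : MvPolynomial σ ℂ} {f : σ → τ}
    (hf : Function.Injective f) (h : HasWaringDecomp d (MvPolynomial.rename f P) r) :
    HasWaringDecomp d P r := by
  simpa using h.map (killCompl hf) fun v => by
    rw [killCompl, aeval_X]
    split_ifs
    exacts [isHomogeneous_X _ _, isHomogeneous_zero _ _ _]

lemma exists_hasWaringDecomp (hd : d ≠ 0) {P : MvPolynomial σ ℂ}
    (hP : P.IsHomogeneous d) : ∃ r, HasWaringDecomp d P r := by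
  have hW := homogeneousSubmodule_le_span_pow d hP
  clear hP
  induction hW using Submodule.span_induction with
  | mem _ h =>
    obtain ⟨ℓ, hℓ, rfl⟩ := h
    exact ⟨1, {ℓ}, rfl, by simpa using hℓ, by simp⟩
  | zero => exact ⟨0, 0, rfl, by simp, by simp⟩
  | add _ _ _ _ h₁ h₂ =>
    obtain ⟨r, hr⟩ := h₁
    obtain ⟨s, hs⟩ := h₂
    exact ⟨r + s, hr.add hs⟩
  | smul c _ _ h =>
    obtain ⟨r, hr⟩ := h
    exact ⟨r, hr.smul hd c⟩

end WaringDecomp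

section Pencil

variable {σ : Type*} {d : ℕ} {P : MvPolynomial σ ℂ}

lemma HasWaringDecomp.of_forall_add_pow_of_two_ne_zero (hd : 2 ≤ d) {K J : MvPolynomial σ ℂ × ℂ}
    {rest : Multiset (MvPolynomial σ ℂ × ℂ)} (hK : K.1.IsHomogeneous 1)
    (hJ : J.1.IsHomogeneous 1) (hrest : ∀ q ∈ rest, q.1.IsHomogeneous 1) (hJ0 : J.2 ≠ 0)
    (h : ∀ ℓ, P + ℓ ^ d = (K.1 + K.2 • ℓ) ^ d + (J.1 + J.2 • ℓ) ^ d +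
      (rest.map fun q => (q.1 + q.2 • ℓ) ^ d).sum) :
    HasWaringDecomp d P (Multiset.card rest + 1) := by
  obtain ⟨ω, hω, hωne⟩ := Complex.exists_pow_eq_neg_one_ne hd (K.2 / J.2)
  have hden : K.2 - ω * J.2 ≠ 0 := fun h0 =>
    hωne ((eq_div_iff hJ0).2 (by linear_combination -h0))
  set ℓ := (K.2 - ω * J.2)⁻¹ • (ω • J.1 - K.1)
  have hℓ : ℓ.IsHomogeneous 1 := (homogeneousSubmodule σ ℂ 1).smul_mem _
    (Submodule.sub_mem _ (Submodule.smul_mem _ _ hJ) hK)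
  have hKJ : K.1 + K.2 • ℓ = ω • (J.1 + J.2 • ℓ) := by
    have : (K.2 - ω * J.2) • ℓ = ω • J.1 - K.1 := by simp [ℓ, smul_smul, mul_inv_cancel₀ hden]
    linear_combination (norm := module) this
  clear_value ℓ
  have hP : P = (rest.map fun q => (q.1 + q.2 • ℓ) ^ d).sum + (ω • ℓ) ^ d := by
    have := h ℓ
    rw [hKJ, smul_pow, hω] at this
    rw [smul_pow, hω]
    linear_combination (norm := module) this
  refine ⟨(ω • ℓ) ::ₘ rest.map fun q => q.1 + q.2 • ℓ, by simp, ?_, ?_⟩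
  · simp only [Multiset.mem_cons, Multiset.mem_map]
    rintro _ (rfl | ⟨q, hq, rfl⟩)
    · exact (homogeneousSubmodule σ ℂ 1).smul_mem _ hℓ
    · exact (hrest q hq).add ((homogeneousSubmodule σ ℂ 1).smul_mem _ hℓ)
  · simp [hP, Multiset.map_map, add_comm]

lemma HasWaringDecomp.of_forall_add_pow_of_unique_ne_zero (hd : 2 ≤ d) {K : MvPolynomial σ ℂ × ℂ}
    {rest : Multiset (MvPolynomial σ ℂ)} (hrest : ∀ A ∈ rest, A.IsHomogeneous 1) (hK0 : K.2 ≠ 0)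
    (h : ∀ ℓ, P + ℓ ^ d = (K.1 + K.2 • ℓ) ^ d + (rest.map (· ^ d)).sum) :
    HasWaringDecomp d P (Multiset.card rest) := by
  have hP : P = K.1 ^ d + (rest.map (· ^ d)).sum := by
    simpa [zero_pow (by omega : d ≠ 0)] using h 0
  suffices hK : K.1 = 0 from ⟨rest, rfl, hrest, by simpa [hK, zero_pow (by omega : d ≠ 0)] using hP⟩
  by_contra hK
  obtain ⟨ω, hω, hωne⟩ := Complex.exists_pow_eq_neg_one_ne hd (-K.2⁻¹)
  have : (1 + K.2 * ω) ^ d • K.1 ^ d = 0 := by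
    have e : K.1 + K.2 • ω • K.1 = (1 + K.2 * ω) • K.1 := by module
    have := h (ω • K.1)
    rw [e, smul_pow, smul_pow, hω, hP] at this
    linear_combination (norm := module) -this
  rcases smul_eq_zero.1 this with h1 | h1
  · exact hωne (by field_simp; linear_combination pow_eq_zero_iff (by omega) |>.1 h1)
  · exact hK (pow_eq_zero_iff (by omega) |>.1 h1)

lemma HasWaringDecomp.of_forall_add_pow (hd : 2 ≤ d) {m : Multiset (MvPolynomial σ ℂ × ℂ)}
    (hm : ∀ q ∈ m, q.1.IsHomogeneous 1)
    (h : ∀ ℓ, P + ℓ ^ d = (m.map fun q => (q.1 + q.2 • ℓ) ^ d).sum) :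
    ∃ r, Multiset.card m = r + 1 ∧ HasWaringDecomp d P r := by
  obtain ⟨K, hKm, hK0⟩ : ∃ K ∈ m, K.2 ≠ 0 := by
    by_contra! h0
    have hconst : ∀ ℓ, P + ℓ ^ d = (m.map fun q => q.1 ^ d).sum := fun ℓ => by
      rw [h ℓ]
      exact congrArg _ (Multiset.map_congr rfl fun q hq => by rw [h0 q hq, zero_smul, add_zero])
    simpa [zero_pow (by omega : d ≠ 0)] using (hconst 1).trans (hconst 0).symm
  obtain ⟨m, rfl⟩ := Multiset.exists_cons_of_mem hKm
  by_cases hJ : ∃ J ∈ m, J.2 ≠ 0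
  · obtain ⟨J, hJm, hJ0⟩ := hJ
    obtain ⟨rest, rfl⟩ := Multiset.exists_cons_of_mem hJm
    refine ⟨_, by simp, HasWaringDecomp.of_forall_add_pow_of_two_ne_zero hd (rest := rest)
      (hm K (by simp)) (hm J (by simp)) (fun q hq => hm q (by simp [hq])) hJ0 fun ℓ => ?_⟩
    simpa [add_assoc] using h ℓ
  · push Not at hJ
    refine ⟨_, by simp,
      HasWaringDecomp.of_forall_add_pow_of_unique_ne_zero hd (rest := m.map Prod.fst)
      (by simpa using fun q hq => hm q (by simp [hq])) hK0 fun ℓ => ?_⟩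
    rw [h ℓ, Multiset.map_cons, Multiset.sum_cons, Multiset.map_map]
    exact congrArg _ (congrArg _ (Multiset.map_congr rfl fun q hq => by simp [hJ q hq]))

end Pencil

lemma HasWaringDecomp.of_add_X_pow {σ : Type*} [DecidableEq σ] {d r : ℕ} (hd : 2 ≤ d)
    {P : MvPolynomial σ ℂ} {y : σ} (hy : y ∉ P.vars) (h : HasWaringDecomp d (P + X y ^ d) r) :
    ∃ r', r = r' + 1 ∧ HasWaringDecomp d P r' := by
  obtain ⟨m, rfl, hm, hsum⟩ := h
  have hA : ∀ M ∈ m, (aeval (Function.update X y 0) M).IsHomogeneous 1 := fun M hM => by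
    simpa using (hm M hM).aeval _ fun v => by
      rcases eq_or_ne v y with rfl | hv
      · simpa using isHomogeneous_zero σ ℂ 1
      · simpa [Function.update_of_ne hv] using isHomogeneous_X ℂ v
  simpa using HasWaringDecomp.of_forall_add_pow hd
    (m := m.map fun M => (aeval (Function.update X y 0) M, coeff (Finsupp.single y 1) M))
    (by simpa using hA) fun ℓ => by
      have := congrArg (aeval (Function.update X y ℓ)) hsum
      rw [map_add, aeval_update_X_of_notMem_vars hy, map_pow, aeval_X, Function.update_self,
        map_multiset_sum, Multiset.map_map] at this
      rw [this, Multiset.map_map]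
      exact congrArg _ (Multiset.map_congr rfl fun M hM => by
        rw [Function.comp_apply, map_pow, aeval_update_X_of_isHomogeneous_one y (hm M hM)]; rfl)

lemma HasWaringDecomp.of_add_sum_X_pow {σ : Type*} [DecidableEq σ] {d : ℕ} (hd : 2 ≤ d)
    {P : MvPolynomial σ ℂ} (T : Finset σ) (hT : ∀ y ∈ T, y ∉ P.vars) {r : ℕ}
    (h : HasWaringDecomp d (P + ∑ y ∈ T, X y ^ d) r) :
    ∃ r', r = r' + T.card ∧ HasWaringDecomp d P r' := by
  induction T using Finset.induction_on generalizing r with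
  | empty => exact ⟨r, rfl, by simpa using h⟩
  | insert a T ha ih =>
    have hvars : a ∉ (P + ∑ y ∈ T, X y ^ d).vars := fun hmem => by
      rcases Finset.mem_union.1 (vars_add_subset _ _ hmem) with hP | hS
      · exact hT a (Finset.mem_insert_self a T) hP
      · obtain ⟨y, hy, hay⟩ := Finset.mem_biUnion.1 (vars_sum_subset _ _ hS)
        have hay : a = y := by simpa [vars_X] using vars_pow _ _ hay
        exact ha (hay ▸ hy)
    rw [Finset.sum_insert ha, add_comm (X a ^ d), ← add_assoc] at h
    obtain ⟨r₁, rfl, h₁⟩ := h.of_add_X_pow hd hvars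
    obtain ⟨r', rfl, h'⟩ := ih (fun y hy => hT y (Finset.mem_insert_of_mem hy)) h₁
    exact ⟨r', by rw [Finset.card_insert_of_notMem ha]; ring, h'⟩

lemma HasWaringDecomp.of_rename_add_rename_sum_pow {σ τ ι : Type*} [Fintype ι] {d r : ℕ}
    (hd : 2 ≤ d) {P : MvPolynomial σ ℂ} {L : ι → MvPolynomial τ ℂ}
    (hL1 : ∀ i, (L i).IsHomogeneous 1) (hL : LinearIndependent ℂ L)
    (h : HasWaringDecomp d
      (MvPolynomial.rename Sum.inl P + MvPolynomial.rename Sum.inr (∑ i, L i ^ d)) r) :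
    ∃ r', r = r' + Fintype.card ι ∧ HasWaringDecomp d P r' := by
  classical
  obtain ⟨θ, hθX, hθL⟩ := exists_algHom_map_eq_X_of_linearIndependent hL1 hL
  let Θ : MvPolynomial (σ ⊕ τ) ℂ →ₐ[ℂ] MvPolynomial (σ ⊕ ι) ℂ :=
    aeval (Sum.elim (X ∘ Sum.inl) (MvPolynomial.rename Sum.inr ∘ θ ∘ X))
  have hΘl : Θ.comp (MvPolynomial.rename Sum.inl) = MvPolynomial.rename Sum.inl :=
    algHom_ext fun v => by simp [Θ]
  have hΘr : Θ.comp (MvPolynomial.rename Sum.inr) = (MvPolynomial.rename Sum.inr).comp θ :=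
    algHom_ext fun w => by simp [Θ]
  set T : Finset (σ ⊕ ι) := Finset.univ.map Function.Embedding.inr
  have hΘ : Θ (MvPolynomial.rename Sum.inl P + MvPolynomial.rename Sum.inr (∑ i, L i ^ d)) =
      MvPolynomial.rename Sum.inl P + ∑ y ∈ T, X y ^ d := by
    rw [map_add, ← AlgHom.comp_apply, hΘl, ← AlgHom.comp_apply, hΘr]
    simp [T, hθL]
  have hT : ∀ y ∈ T, y ∉ (MvPolynomial.rename Sum.inl P).vars := by
    intro y hy hvars
    obtain ⟨i, -, rfl⟩ := Finset.mem_map.1 hy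
    obtain ⟨v, -, hv⟩ := Finset.mem_image.1 (vars_rename _ _ hvars)
    exact Sum.inl_ne_inr hv
  have hΘX : ∀ z, (Θ (X z)).IsHomogeneous 1 := by
    rintro (v | w)
    · simpa [Θ] using isHomogeneous_X ℂ (Sum.inl v : σ ⊕ ι)
    · simpa [Θ] using (hθX w).rename_isHomogeneous
  obtain ⟨r', hr', hP⟩ := (hΘ ▸ h.map Θ hΘX).of_add_sum_X_pow hd T hT
  exact ⟨r', by simpa [T] using hr', hP.of_rename Sum.inl_injective⟩

theorem stmt2_general (n m d s : ℕ) (hd : 1 < d)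
    (F : MvPolynomial (Fin (n + 1)) ℂ) (G : MvPolynomial (Fin (m + 1)) ℂ)
    (hF : F.IsHomogeneous d)
    (hs : waringRank d G = s)
    (L : Fin s → MvPolynomial (Fin (m + 1)) ℂ)
    (hL1 : ∀ i, (L i).IsHomogeneous 1)
    (hLind : LinearIndependent ℂ L)
    (hGdec : G = ∑ i, (L i) ^ d) :
    waringRank d
        (rename (Sum.inl : Fin (n + 1) → Fin (n + 1) ⊕ Fin (m + 1)) F +
          rename (Sum.inr : Fin (m + 1) → Fin (n + 1) ⊕ Fin (m + 1)) G) =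
      waringRank d F + waringRank d G := by
  subst hGdec
  obtain ⟨r, hFr⟩ := exists_hasWaringDecomp (by omega) hF
  have hsum := (hFr.waringRank.rename Sum.inl).add
    ((hasWaringDecomp_sum_pow (d := d) hL1).rename Sum.inr)
  obtain ⟨r', hr', hFr'⟩ := hsum.waringRank.of_rename_add_rename_sum_pow hd hL1 hLind
  rw [Fintype.card_fin] at hsum hr'
  have hle := hsum.waringRank_le
  have hge := hFr'.waringRank_le
  omega

/-- SAC holds when `G` essentially involves `rk(G)` variables, i.e. `G` is a sum of
`rk(G)` powers of linearly independent linear forms. -/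
theorem stmt2 (n m d s : ℕ) (hd : 1 < d)
    (F : MvPolynomial (Fin (n + 1)) ℂ) (G : MvPolynomial (Fin (m + 1)) ℂ)
    (hF0 : F ≠ 0) (hG0 : G ≠ 0)
    (hF : F.IsHomogeneous d) (hG : G.IsHomogeneous d)
    (hs : waringRank d G = s)
    (L : Fin s → MvPolynomial (Fin (m + 1)) ℂ)
    (hL1 : ∀ i, (L i).IsHomogeneous 1)
    (hLind : LinearIndependent ℂ L)
    (hGdec : G = ∑ i, (L i) ^ d) :
    waringRank d
        (rename (Sum.inl : Fin (n + 1) → Fin (n + 1) ⊕ Fin (m + 1)) F +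
          rename (Sum.inr : Fin (m + 1) → Fin (n + 1) ⊕ Fin (m + 1)) G) =
      waringRank d F + waringRank d G :=
  stmt2_general n m d s hd F G hF hs L hL1 hLind hGdec
end

section
/- Fix d > 1 and variable sets x_0,…,x_n and y_0,…,y_m. Suppose that for all non-zero degree-d forms F ∈ ℂ[x_0,…,x_n] and G ∈ ℂ[y_0,…,y_m] there is no expression F + G = H_1^d + ⋯ + H_t^d with t < rk(F) + rk(G) in which every linear form H_i lies outside both ℂ[x_0,…,x_n] and ℂ[y_0,…,y_m]. Then for all non-zero degree-d forms F ∈ ℂ[x_0,…,x_n] and G ∈ ℂ[y_0,…,y_m] one has rk(F + G) = rk(F) + rk(G). -/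
open MvPolynomial Finset
open Finset

lemma neg_one_pow_sub' {A : Type*} [CommRing A] {c u : ℕ} (h : u ≤ c) :
    ((-1 : A)) ^ (c - u) = (-1) ^ c * (-1) ^ u := by
  have : ((-1 : A)) ^ (c - u) * ((-1) ^ u * (-1) ^ u) = (-1) ^ c * (-1) ^ u := by
    rw [← mul_assoc, ← pow_add, Nat.sub_add_cancel h]
  simpa [← pow_add, ← two_mul, pow_mul] using this

lemma sumPowNegOne {A : Type*} [CommRing A] {β : Type*} [DecidableEq β] (X : Finset β) :
    ∑ U ∈ X.powerset, (-1 : A) ^ U.card = if X = ∅ then 1 else 0 := by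
  have h := Finset.sum_powerset_neg_one_pow_card (x := X)
  calc ∑ U ∈ X.powerset, (-1 : A) ^ U.card
      = ((∑ U ∈ X.powerset, (-1 : ℤ) ^ U.card : ℤ) : A) := by push_cast; rfl
    _ = _ := by rw [h]; split <;> simp

lemma myInnerSum {A : Type*} [CommRing A] (d : ℕ) (p : Fin d → Fin d) :
    ∑ S ∈ Finset.univ.filter (fun S : Finset (Fin d) => ∀ i, p i ∈ S),
        (-1 : A) ^ (d - S.card)
      = if Function.Surjective p then 1 else 0 := by
  classical
  set T : Finset (Fin d) := Finset.image p Finset.univ with hT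
  have hfilter : Finset.univ.filter (fun S : Finset (Fin d) => ∀ i, p i ∈ S)
      = Finset.univ.filter (fun S : Finset (Fin d) => T ⊆ S) := by
    apply Finset.filter_congr
    intro S _
    simp [hT, Finset.image_subset_iff]
  rw [hfilter]
  have key : ∑ S ∈ Finset.univ.filter (fun S : Finset (Fin d) => T ⊆ S),
      (-1 : A) ^ (d - S.card)
      = ∑ U ∈ Tᶜ.powerset, (-1 : A) ^ (d - (T ∪ U).card) := by
    refine Finset.sum_nbij' (fun S => S \ T) (fun U => T ∪ U) ?_ ?_ ?_ ?_ ?_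
    · intro S hS
      simp only [Finset.mem_filter] at hS
      simp only [Finset.mem_powerset]
      intro x hx
      simp only [Finset.mem_sdiff] at hx
      simp [Finset.mem_compl, hx.2]
    · intro U hU
      simp
    · intro S hS
      simp only [Finset.mem_filter] at hS
      show T ∪ S \ T = S
      exact Finset.union_sdiff_of_subset hS.2
    · intro U hU
      simp only [Finset.mem_powerset] at hU
      show (T ∪ U) \ T = U
      rw [Finset.union_sdiff_left]
      exact Finset.sdiff_eq_self_of_disjoint (Finset.disjoint_left.mpr
        fun x hx hxT => (Finset.mem_compl.mp (hU hx)) hxT)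
    · intro S hS
      simp only [Finset.mem_filter] at hS
      rw [Finset.union_sdiff_of_subset hS.2]
  rw [key]
  have hcard : ∀ U ∈ Tᶜ.powerset, (T ∪ U).card = T.card + U.card := by
    intro U hU
    simp only [Finset.mem_powerset] at hU
    rw [Finset.card_union_of_disjoint]
    exact Finset.disjoint_left.mpr fun x hxT hxU => (Finset.mem_compl.mp (hU hxU)) hxT
  have hTc : Tᶜ.card = d - T.card := by
    rw [Finset.card_compl]
    simp
  calc ∑ U ∈ Tᶜ.powerset, (-1 : A) ^ (d - (T ∪ U).card)
      = ∑ U ∈ Tᶜ.powerset, (-1 : A) ^ (Tᶜ.card) * (-1) ^ U.card := by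
        apply Finset.sum_congr rfl
        intro U hU
        rw [hcard U hU, hTc]
        have h1 : U.card ≤ d - T.card := by
          have := Finset.card_le_card (Finset.mem_powerset.mp hU)
          omega
        have h2 : T.card + U.card ≤ d := by
          have := Finset.card_le_univ T
          simp at this
          omega
        rw [show d - (T.card + U.card) = (d - T.card) - U.card by omega]
        exact neg_one_pow_sub' h1
    _ = (-1 : A) ^ (Tᶜ.card) * ∑ U ∈ Tᶜ.powerset, (-1 : A) ^ U.card := by
        rw [Finset.mul_sum]
    _ = if Function.Surjective p then 1 else 0 := by
        rw [sumPowNegOne]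
        by_cases hs : Function.Surjective p
        · have : T = Finset.univ := by
            apply Finset.eq_univ_of_forall
            intro x
            obtain ⟨y, hy⟩ := hs x
            simp [hT, ← hy]
          simp [hs, this]
        · have : Tᶜ ≠ ∅ := by
            intro hc
            apply hs
            intro x
            have : T = Finset.univ := by
              rwa [Finset.compl_eq_empty_iff] at hc
            have hx : x ∈ T := this ▸ Finset.mem_univ x
            simp only [hT, Finset.mem_image] at hx
            obtain ⟨y, _, hy⟩ := hx
            exact ⟨y, hy⟩
          simp [hs, this]

/-- Polarization identity. -/
lemma polar {A : Type*} [CommRing A] (d : ℕ) (z : Fin d → A) :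
    ∑ S : Finset (Fin d), (-1 : A) ^ (d - S.card) * (∑ j ∈ S, z j) ^ d
      = ((Nat.factorial d : ℕ) : A) * ∏ j, z j := by
  classical
  simp_rw [Finset.sum_pow' _ z d, Finset.mul_sum]
  rw [Finset.sum_comm' (t' := Finset.univ)
    (s' := fun p => Finset.univ.filter (fun S : Finset (Fin d) => ∀ i, p i ∈ S))
    (by intro S p; simp [Fintype.mem_piFinset])]
  have : ∀ p : Fin d → Fin d,
      ∑ S ∈ Finset.univ.filter (fun S : Finset (Fin d) => ∀ i, p i ∈ S),
        (-1 : A) ^ (d - S.card) * ∏ i, z (p i)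
      = (if Function.Surjective p then 1 else 0) * ∏ i, z (p i) := by
    intro p
    rw [← Finset.sum_mul, myInnerSum]
  simp_rw [this, boole_mul]
  rw [← Finset.sum_filter]
  have himg : Finset.univ.filter (fun p : Fin d → Fin d => Function.Surjective p)
      = Finset.image (fun e : Equiv.Perm (Fin d) => ⇑e) Finset.univ := by
    ext p
    simp only [Finset.mem_filter, Finset.mem_image, Finset.mem_univ, true_and]
    constructor
    · intro hs
      exact ⟨Equiv.ofBijective p (Finite.surjective_iff_bijective.mp hs), rfl⟩
    · rintro ⟨e, rfl⟩
      exact e.surjective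
  rw [himg, Finset.sum_image (by intro a _ b _ h; exact Equiv.coe_fn_injective h)]
  have : ∀ e : Equiv.Perm (Fin d), ∏ i, z (e i) = ∏ i, z i := fun e => Equiv.prod_comp e z
  simp_rw [this, Finset.sum_const, Finset.card_univ, Fintype.card_perm, Fintype.card_fin,
    nsmul_eq_mul]

open MvPolynomial Finset

section
variable {σ : Type*}

/-- The set of d-th powers of linear forms. -/
def powSet (σ : Type*) (d : ℕ) : Set (MvPolynomial σ ℂ) :=
  {Q | ∃ L : MvPolynomial σ ℂ, L.IsHomogeneous 1 ∧ Q = L ^ d}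

lemma monomial_mem_span {d : ℕ} (hd : 0 < d) (α : σ →₀ ℕ)
    (hα : (Finsupp.weight 1) α = d) :
    (monomial α (1 : ℂ)) ∈ Submodule.span ℂ (powSet σ d) := by
  classical
  -- the list of variables with multiplicity
  set l : List σ := α.toMultiset.toList with hl
  have hlen : l.length = d := by
    rw [hl, Multiset.length_toList, Finsupp.card_toMultiset]
    rw [Finsupp.weight_apply] at hα
    simpa [Finsupp.sum] using hα
  set v : Fin d → σ := fun j => l.get (Fin.cast hlen.symm j) with hv
  have hprod : ∏ j : Fin d, X (v j) = (monomial α (1 : ℂ)) := by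
    have h1 : ∏ j : Fin d, (X (v j) : MvPolynomial σ ℂ)
        = ∏ i : Fin l.length, X (l.get i) := by
      exact Fintype.prod_equiv (finCongr hlen.symm) _ _ (fun i => rfl)
    have h2 : ((l.map X).prod : MvPolynomial σ ℂ)
        = ∏ i : Fin l.length, (X (l.get i) : MvPolynomial σ ℂ) := by
      conv_lhs => rw [← List.ofFn_get l, List.map_ofFn]
      rw [List.prod_ofFn]
      rfl
    have h3 : ((l.map X).prod : MvPolynomial σ ℂ)
        = ((α.toMultiset.map X).prod : MvPolynomial σ ℂ) := by
      rw [hl, ← Multiset.coe_toList α.toMultiset, Multiset.map_coe, Multiset.prod_coe]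
      simp
    have h4 : ((α.toMultiset.map X).prod : MvPolynomial σ ℂ)
        = α.prod fun a n => X a ^ n := by
      rw [Finsupp.toMultiset_map, Finsupp.prod_toMultiset,
        Finsupp.prod_mapDomain_index_inj X_injective]
    rw [h1, ← h2, h3, h4, monomial_eq, C_1, one_mul]
  rw [← hprod]
  -- use the polarization identity
  have hpolar := polar d (fun j => (X (v j) : MvPolynomial σ ℂ))
  have hfact : ((d.factorial : ℂ)) ≠ 0 := by
    exact_mod_cast Nat.cast_ne_zero.mpr (Nat.factorial_ne_zero d)
  have : (∏ j : Fin d, (X (v j) : MvPolynomial σ ℂ))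
      = ((d.factorial : ℂ))⁻¹ • ∑ S : Finset (Fin d),
          (-1 : MvPolynomial σ ℂ) ^ (d - S.card) * (∑ j ∈ S, X (v j)) ^ d := by
    rw [hpolar]
    rw [show ((d.factorial : ℕ) : MvPolynomial σ ℂ) = C ((d.factorial : ℂ)) by push_cast; rfl]
    rw [smul_eq_C_mul, ← mul_assoc, ← C_mul, inv_mul_cancel₀ hfact, C_1, one_mul]
  rw [this]
  apply Submodule.smul_mem
  apply Submodule.sum_mem
  intro S _
  rw [show (-1 : MvPolynomial σ ℂ) ^ (d - S.card) = C ((-1 : ℂ) ^ (d - S.card)) by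
    rw [map_pow, map_neg, map_one]]
  rw [← smul_eq_C_mul]
  apply Submodule.smul_mem
  apply Submodule.subset_span
  exact ⟨∑ j ∈ S, X (v j), IsHomogeneous.sum _ _ _ (fun j _ => isHomogeneous_X _ _), rfl⟩

lemma exists_decomp {d : ℕ} (hd : 0 < d) (P : MvPolynomial σ ℂ)
    (hP : P.IsHomogeneous d) :
    ∃ (r : ℕ) (L : Fin r → MvPolynomial σ ℂ),
      (∀ i, (L i).IsHomogeneous 1) ∧ P = ∑ i, L i ^ d := by
  classical
  have hspan : P ∈ Submodule.span ℂ (powSet σ d) := by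
    rw [as_sum P]
    apply Submodule.sum_mem
    intro α hα
    have : (monomial α (coeff α P)) = (coeff α P) • monomial α (1 : ℂ) := by
      rw [smul_monomial, smul_eq_mul, mul_one]
    rw [this]
    exact Submodule.smul_mem _ _
      (monomial_mem_span hd α (hP (mem_support_iff.mp hα)))
  obtain ⟨r, c, x, hsum⟩ := Submodule.mem_span_set'.mp hspan
  have hchoice : ∀ i : Fin r, ∃ M : MvPolynomial σ ℂ,
      M.IsHomogeneous 1 ∧ c i • (x i : MvPolynomial σ ℂ) = M ^ d := by
    intro i
    obtain ⟨L, hL, hLeq⟩ := (x i).2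
    obtain ⟨co, hco⟩ := IsAlgClosed.exists_pow_nat_eq (c i) hd
    refine ⟨C co * L, hL.C_mul co, ?_⟩
    rw [mul_pow, ← C_pow, hco, ← smul_eq_C_mul, hLeq]
  choose M hM1 hM2 using hchoice
  refine ⟨r, M, hM1, ?_⟩
  rw [← hsum]
  exact Finset.sum_congr rfl fun i _ => hM2 i

end
section WaringRank

variable {σ τ : Type*}

lemma rank_le_of_witness {d r : ℕ} {P : MvPolynomial σ ℂ}
    (L : Fin r → MvPolynomial σ ℂ) (h1 : ∀ i, (L i).IsHomogeneous 1)
    (h2 : P = ∑ i, L i ^ d) : waringRank d P ≤ r :=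
  Nat.sInf_le ⟨L, h1, h2⟩

lemma waringRank_zero (d : ℕ) : waringRank d (0 : MvPolynomial σ ℂ) = 0 :=
  Nat.le_zero.mp (rank_le_of_witness Fin.elim0 (fun i => i.elim0) (by simp))

lemma exists_min_decomp {d : ℕ} (hd : 0 < d) {P : MvPolynomial σ ℂ}
    (hP : P.IsHomogeneous d) :
    ∃ L : Fin (waringRank d P) → MvPolynomial σ ℂ,
      (∀ i, (L i).IsHomogeneous 1) ∧ P = ∑ i, L i ^ d := by
  have hne : {r : ℕ | ∃ L : Fin r → MvPolynomial σ ℂ,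
      (∀ i, (L i).IsHomogeneous 1) ∧ P = ∑ i, (L i) ^ d}.Nonempty := by
    obtain ⟨r, L, h1, h2⟩ := exists_decomp hd P hP
    exact ⟨r, L, h1, h2⟩
  exact Nat.sInf_mem hne

/-- Applying a "linear" algebra map to a decomposition bounds the rank. -/
lemma rank_aeval_le {d r : ℕ} {P : MvPolynomial σ ℂ} (g : σ → MvPolynomial τ ℂ)
    (hg : ∀ i, (g i).IsHomogeneous 1)
    (L : Fin r → MvPolynomial σ ℂ) (h1 : ∀ i, (L i).IsHomogeneous 1)
    (h2 : P = ∑ i, L i ^ d) :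
    waringRank d (aeval g P) ≤ r := by
  apply rank_le_of_witness (fun i => aeval g (L i))
  · intro i
    have := (h1 i).aeval g hg
    rwa [one_mul] at this
  · rw [h2, map_sum]
    simp_rw [map_pow]

end WaringRank

section Main

variable {n m : ℕ}

local notation "R1" => MvPolynomial (Fin (n + 1)) ℂ
local notation "R2" => MvPolynomial (Fin (m + 1)) ℂ
local notation "S" => MvPolynomial (Fin (n + 1) ⊕ Fin (m + 1)) ℂ

/-- projection to the x-variables -/
noncomputable def πx (n m : ℕ) : MvPolynomial (Fin (n + 1) ⊕ Fin (m + 1)) ℂ →ₐ[ℂ]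
    MvPolynomial (Fin (n + 1)) ℂ :=
  aeval (Sum.elim X 0)

noncomputable def πy (n m : ℕ) : MvPolynomial (Fin (n + 1) ⊕ Fin (m + 1)) ℂ →ₐ[ℂ]
    MvPolynomial (Fin (m + 1)) ℂ :=
  aeval (Sum.elim 0 X)

lemma πx_lin (i : Fin (n + 1) ⊕ Fin (m + 1)) :
    ((Sum.elim X 0 : _ → R1) i).IsHomogeneous 1 := by
  cases i with
  | inl a => exact isHomogeneous_X _ _
  | inr b => exact isHomogeneous_zero _ _ _

lemma πy_lin (i : Fin (n + 1) ⊕ Fin (m + 1)) :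
    ((Sum.elim 0 X : _ → R2) i).IsHomogeneous 1 := by
  cases i with
  | inl a => exact isHomogeneous_zero _ _ _
  | inr b => exact isHomogeneous_X _ _

lemma constCoeff_eq_zero {d : ℕ} (hd : 0 < d) {σ : Type*} {P : MvPolynomial σ ℂ}
    (hP : P.IsHomogeneous d) : constantCoeff P = 0 := by
  rw [show (constantCoeff P : ℂ) = coeff 0 P from rfl]
  apply hP.coeff_eq_zero
  simp only [map_zero]
  omega

lemma πx_inl {d : ℕ} (hd : 0 < d) (F : R1) (G : R2) (hG : G.IsHomogeneous d) :
    πx n m (rename Sum.inl F + rename Sum.inr G) = F := by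
  rw [map_add]
  have h1 : πx n m (rename Sum.inl F) = F := by
    show aeval (Sum.elim X 0) (rename Sum.inl F) = F
    rw [aeval_rename]
    show aeval X F = F
    rw [aeval_X_left_apply]
  have h2 : πx n m (rename Sum.inr G) = 0 := by
    show aeval (Sum.elim X 0) (rename Sum.inr G) = 0
    rw [aeval_rename]
    show aeval (fun _ => 0) G = 0
    rw [aeval_zero', constCoeff_eq_zero hd hG, map_zero]
  rw [h1, h2, add_zero]

lemma πy_inr {d : ℕ} (hd : 0 < d) (F : R1) (hF : F.IsHomogeneous d) (G : R2) :
    πy n m (rename Sum.inl F + rename Sum.inr G) = G := by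
  rw [map_add]
  have h1 : πy n m (rename Sum.inr G) = G := by
    show aeval (Sum.elim 0 X) (rename Sum.inr G) = G
    rw [aeval_rename]
    show aeval X G = G
    rw [aeval_X_left_apply]
  have h2 : πy n m (rename Sum.inl F) = 0 := by
    show aeval (Sum.elim 0 X) (rename Sum.inl F) = 0
    rw [aeval_rename]
    show aeval (fun _ => 0) F = 0
    rw [aeval_zero', constCoeff_eq_zero hd hF, map_zero]
  rw [h1, h2, zero_add]

end Main
section Claim

variable {n m : ℕ}

lemma rank_sub_pow_le {σ : Type*} {d : ℕ} (hd : 0 < d) {F L : MvPolynomial σ ℂ}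
    (hF' : (F - L ^ d).IsHomogeneous d) (hL : L.IsHomogeneous 1) :
    waringRank d F ≤ waringRank d (F - L ^ d) + 1 := by
  obtain ⟨L', h1, h2⟩ := exists_min_decomp hd hF'
  apply rank_le_of_witness (Fin.snoc L' L)
  · intro i
    induction i using Fin.lastCases with
    | last => rw [Fin.snoc_last]; exact hL
    | cast i => rw [Fin.snoc_castSucc]; exact h1 i
  · rw [Fin.sum_univ_castSucc]
    simp only [Fin.snoc_castSucc, Fin.snoc_last]
    rw [← h2]
    ring

lemma claim (d : ℕ) (hd : 1 < d)
    (hyp : ∀ (F : MvPolynomial (Fin (n + 1)) ℂ) (G : MvPolynomial (Fin (m + 1)) ℂ),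
      F ≠ 0 → G ≠ 0 → F.IsHomogeneous d → G.IsHomogeneous d →
      ¬ ∃ (t : ℕ) (H : Fin t → MvPolynomial (Fin (n + 1) ⊕ Fin (m + 1)) ℂ),
          t < waringRank d F + waringRank d G ∧
          (∀ i, (H i).IsHomogeneous 1) ∧
          (∀ i, H i ∉
            (rename (Sum.inl : Fin (n + 1) → Fin (n + 1) ⊕ Fin (m + 1)) :
              MvPolynomial (Fin (n + 1)) ℂ →ₐ[ℂ]
                MvPolynomial (Fin (n + 1) ⊕ Fin (m + 1)) ℂ).range) ∧
          (∀ i, H i ∉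
            (rename (Sum.inr : Fin (m + 1) → Fin (n + 1) ⊕ Fin (m + 1)) :
              MvPolynomial (Fin (m + 1)) ℂ →ₐ[ℂ]
                MvPolynomial (Fin (n + 1) ⊕ Fin (m + 1)) ℂ).range) ∧
          rename (Sum.inl : Fin (n + 1) → Fin (n + 1) ⊕ Fin (m + 1)) F +
              rename (Sum.inr : Fin (m + 1) → Fin (n + 1) ⊕ Fin (m + 1)) G =
            ∑ i, (H i) ^ d) :
    ∀ (t : ℕ) (F : MvPolynomial (Fin (n + 1)) ℂ) (G : MvPolynomial (Fin (m + 1)) ℂ),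
      F.IsHomogeneous d → G.IsHomogeneous d →
      ∀ H : Fin t → MvPolynomial (Fin (n + 1) ⊕ Fin (m + 1)) ℂ,
        (∀ i, (H i).IsHomogeneous 1) →
        (rename Sum.inl F + rename Sum.inr G = ∑ i, (H i) ^ d) →
        waringRank d F + waringRank d G ≤ t := by
  have hd0 : 0 < d := by omega
  intro t
  induction t with
  | zero =>
    intro F G hF hG H hH hsum
    simp only [Finset.univ_eq_empty, Finset.sum_empty] at hsum
    have hF0 : F = 0 := by
      have := πx_inl hd0 F G hG
      rw [hsum, map_zero] at this
      exact this.symm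
    have hG0 : G = 0 := by
      have := πy_inr hd0 F hF G
      rw [hsum, map_zero] at this
      exact this.symm
    rw [hF0, hG0, waringRank_zero, waringRank_zero]
  | succ t ih =>
    intro F G hF hG H hH hsum
    by_cases hF0 : F = 0
    · -- rank F = 0, project to get rank G ≤ t+1
      rw [hF0, waringRank_zero, zero_add]
      have hG' : G = ∑ i, (πy n m (H i)) ^ d := by
        have := πy_inr hd0 F hF G
        rw [hsum] at this
        rw [← this, map_sum]
        simp_rw [map_pow]
      exact rank_le_of_witness _ (fun i => by
        have := (hH i).aeval (Sum.elim 0 X) πy_lin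
        rwa [one_mul] at this) hG'
    by_cases hG0 : G = 0
    · rw [hG0, waringRank_zero, add_zero]
      have hF' : F = ∑ i, (πx n m (H i)) ^ d := by
        have := πx_inl hd0 F G hG
        rw [hsum] at this
        rw [← this, map_sum]
        simp_rw [map_pow]
      exact rank_le_of_witness _ (fun i => by
        have := (hH i).aeval (Sum.elim X 0) πx_lin
        rwa [one_mul] at this) hF'
    by_cases hle : waringRank d F + waringRank d G ≤ t + 1
    · exact hle
    push_neg at hle
    -- use hyp : some H i lies in one of the two subrings
    have hmix : ∃ i, (H i ∈
        (rename (Sum.inl : Fin (n + 1) → Fin (n + 1) ⊕ Fin (m + 1)) :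
          MvPolynomial (Fin (n + 1)) ℂ →ₐ[ℂ]
            MvPolynomial (Fin (n + 1) ⊕ Fin (m + 1)) ℂ).range) ∨ (H i ∈
        (rename (Sum.inr : Fin (m + 1) → Fin (n + 1) ⊕ Fin (m + 1)) :
          MvPolynomial (Fin (m + 1)) ℂ →ₐ[ℂ]
            MvPolynomial (Fin (n + 1) ⊕ Fin (m + 1)) ℂ).range) := by
      by_contra hcon
      push_neg at hcon
      exact hyp F G hF0 hG0 hF hG
        ⟨t + 1, H, hle, hH, fun i => (hcon i).1, fun i => (hcon i).2, hsum⟩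
    obtain ⟨i0, hi0⟩ := hmix
    rcases hi0 with ⟨L, hLeq0⟩ | ⟨L, hLeq0⟩
    · -- H i0 = rename inl L
      have hLeq : rename (Sum.inl : Fin (n+1) → Fin (n+1) ⊕ Fin (m+1)) L = H i0 := hLeq0
      have hL : L.IsHomogeneous 1 := by
        have := hH i0
        rw [← hLeq] at this
        exact (MvPolynomial.IsHomogeneous.rename_isHomogeneous_iff Sum.inl_injective).mp this
      have hF'hom : (F - L ^ d).IsHomogeneous d := by
        apply hF.sub
        have := hL.pow d
        rwa [one_mul] at this
      have hnew : rename Sum.inl (F - L ^ d) + rename Sum.inr G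
          = ∑ j : Fin t, (H (i0.succAbove j)) ^ d := by
        have hsplit := Fin.sum_univ_succAbove (fun i => (H i) ^ d) i0
        rw [map_sub, map_pow, hLeq]
        rw [hsplit] at hsum
        rw [sub_add_eq_add_sub, hsum]
        ring
      have h1 := ih (F - L ^ d) G hF'hom hG _ (fun j => hH _) hnew
      have h2 := rank_sub_pow_le hd0 hF'hom hL
      omega
    · -- H i0 = rename inr L
      have hLeq : rename (Sum.inr : Fin (m+1) → Fin (n+1) ⊕ Fin (m+1)) L = H i0 := hLeq0
      have hL : L.IsHomogeneous 1 := by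
        have := hH i0
        rw [← hLeq] at this
        exact (MvPolynomial.IsHomogeneous.rename_isHomogeneous_iff Sum.inr_injective).mp this
      have hG'hom : (G - L ^ d).IsHomogeneous d := by
        apply hG.sub
        have := hL.pow d
        rwa [one_mul] at this
      have hnew : rename Sum.inl F + rename Sum.inr (G - L ^ d)
          = ∑ j : Fin t, (H (i0.succAbove j)) ^ d := by
        have hsplit := Fin.sum_univ_succAbove (fun i => (H i) ^ d) i0
        rw [map_sub, map_pow, hLeq]
        rw [hsplit] at hsum
        rw [← add_sub_assoc, hsum]
        ring
      have h1 := ih F (G - L ^ d) hF hG'hom _ (fun j => hH _) hnew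
      have h2 := rank_sub_pow_le hd0 hG'hom hL
      omega

end Claim
/-- To prove SAC it suffices to rule out shorter decompositions where every linear form
involves both groups of variables. -/
theorem stmt3 (n m d : ℕ) (hd : 1 < d)
    (hyp : ∀ (F : MvPolynomial (Fin (n + 1)) ℂ) (G : MvPolynomial (Fin (m + 1)) ℂ),
      F ≠ 0 → G ≠ 0 → F.IsHomogeneous d → G.IsHomogeneous d →
      ¬ ∃ (t : ℕ) (H : Fin t → MvPolynomial (Fin (n + 1) ⊕ Fin (m + 1)) ℂ),
          t < waringRank d F + waringRank d G ∧
          (∀ i, (H i).IsHomogeneous 1) ∧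
          (∀ i, H i ∉
            (rename (Sum.inl : Fin (n + 1) → Fin (n + 1) ⊕ Fin (m + 1)) :
              MvPolynomial (Fin (n + 1)) ℂ →ₐ[ℂ]
                MvPolynomial (Fin (n + 1) ⊕ Fin (m + 1)) ℂ).range) ∧
          (∀ i, H i ∉
            (rename (Sum.inr : Fin (m + 1) → Fin (n + 1) ⊕ Fin (m + 1)) :
              MvPolynomial (Fin (m + 1)) ℂ →ₐ[ℂ]
                MvPolynomial (Fin (n + 1) ⊕ Fin (m + 1)) ℂ).range) ∧
          rename (Sum.inl : Fin (n + 1) → Fin (n + 1) ⊕ Fin (m + 1)) F +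
              rename (Sum.inr : Fin (m + 1) → Fin (n + 1) ⊕ Fin (m + 1)) G =
            ∑ i, (H i) ^ d) :
    ∀ (F : MvPolynomial (Fin (n + 1)) ℂ) (G : MvPolynomial (Fin (m + 1)) ℂ),
      F ≠ 0 → G ≠ 0 → F.IsHomogeneous d → G.IsHomogeneous d →
      waringRank d
          (rename (Sum.inl : Fin (n + 1) → Fin (n + 1) ⊕ Fin (m + 1)) F +
            rename (Sum.inr : Fin (m + 1) → Fin (n + 1) ⊕ Fin (m + 1)) G) =
        waringRank d F + waringRank d G := by

  intro F G hF0 hG0 hF hG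
  have hd0 : 0 < d := by omega
  apply le_antisymm
  · -- upper bound: concatenate minimal decompositions
    obtain ⟨LF, hLF1, hLF2⟩ := exists_min_decomp hd0 hF
    obtain ⟨LG, hLG1, hLG2⟩ := exists_min_decomp hd0 hG
    apply rank_le_of_witness
      (Fin.append (fun i => rename Sum.inl (LF i)) (fun j => rename Sum.inr (LG j)))
    · intro i
      induction i using Fin.addCases with
      | left i => rw [Fin.append_left]; exact (hLF1 i).rename_isHomogeneous
      | right j => rw [Fin.append_right]; exact (hLG1 j).rename_isHomogeneous
    · rw [Fin.sum_univ_add]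
      simp only [Fin.append_left, Fin.append_right]
      conv_lhs => rw [hLF2, hLG2]
      rw [map_sum, map_sum]
      simp_rw [map_pow]
  · -- lower bound via the induction claim
    have hA : (rename (Sum.inl : Fin (n + 1) → Fin (n + 1) ⊕ Fin (m + 1)) F +
        rename (Sum.inr : Fin (m + 1) → Fin (n + 1) ⊕ Fin (m + 1)) G).IsHomogeneous d :=
      (hF.rename_isHomogeneous).add (hG.rename_isHomogeneous)
    obtain ⟨H, hH1, hH2⟩ := exists_min_decomp hd0 hA
    exact claim d hd hyp _ F G hF hG H hH1 hH2
end

section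
/- Let d > 1 and let F ∈ ℂ[x_0,…,x_n], G ∈ ℂ[y_0,…,y_m] be non-zero degree-d forms with rk(F) = r, rk(G) = s, and minimal decompositions F = F_1^d + ⋯ + F_r^d, G = G_1^d + ⋯ + G_s^d. Suppose F + G = H_1^d + ⋯ + H_t^d with t < r + s, where the H_i are pairwise non-proportional linear forms none of which lies in ℂ[x_0,…,x_n] or ℂ[y_0,…,y_m]. Then the finite set Z = Z(F) ∪ Z(G) ∪ Z(H) of points of ℙ^{n+m+1} determined by the classes [F_i], [G_j], [H_k] does not impose independent conditions on degree-d forms. -/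
/-!
The apolarity pairing `⟨Q, P⟩ = ∑ α! q_α p_α` satisfies `⟨Q, L ^ d⟩ = d! Q(ℓ)` for a form `Q` of
degree `d` and a linear form `L` with coefficient vector `ℓ`. Since no `H k₀` is proportional to
an `Fᵢ`, a `Gⱼ` or another `Hₖ`, the identity `F + G = ∑ Hₖ ^ d` writes `H k₀ ^ d` as a
combination of `d`-th powers of linear forms whose points lie in `Z ∖ {[H k₀]}`. A degree-`d`
form vanishing on `Z ∖ {[H k₀]}` is apolar to all of them, so it vanishes at `[H k₀]` as well.
If `t = 0`, then `F + G = 0` forces `F = 0`.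
-/

open MvPolynomial

/-- The coefficient vector of (the linear part of) a polynomial: a nonzero linear form
`L` determines via `coeffVec L` the homogeneous coordinates of the point `[L]`. -/
noncomputable def coeffVec {σ : Type*} (L : MvPolynomial σ ℂ) : σ → ℂ :=
  fun j => MvPolynomial.coeff (Finsupp.single j 1) L

/-- A finite set `Z` of points of projective space imposes independent conditions on
degree-`i` forms: for each `p ∈ Z` there is a degree-`i` form vanishing on `Z \ {p}`
but not at `p`. -/
def ImposesIndepConditions {σ : Type*} (i : ℕ)
    (Z : Set (Projectivization ℂ (σ → ℂ))) : Prop :=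
  ∀ p ∈ Z, ∃ Q : MvPolynomial σ ℂ, Q.IsHomogeneous i ∧
    (∀ q ∈ Z, q ≠ p → MvPolynomial.eval q.rep Q = 0) ∧
    MvPolynomial.eval p.rep Q ≠ 0

namespace MvPolynomial

open Finset Nat

section CommSemiring

variable {σ τ R : Type*} [CommSemiring R]

theorem IsHomogeneous.eval_smul {Q : MvPolynomial σ R} {d : ℕ} (hQ : Q.IsHomogeneous d)
    (c : R) (x : σ → R) : eval (c • x) Q = c ^ d * eval x Q := by
  rw [eval_eq, eval_eq, mul_sum]
  refine sum_congr rfl fun α hα => ?_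
  simp only [Pi.smul_apply, smul_eq_mul, mul_pow, prod_mul_distrib, prod_pow_eq_pow_sum,
    ← hQ.degree_eq_sum_deg_support hα]
  ring

theorem IsHomogeneous.eval_eq_zero_of_mem_span_singleton {Q : MvPolynomial σ R} {d : ℕ}
    (hQ : Q.IsHomogeneous d) {v w : σ → R} (hv : v ∈ Submodule.span R {w})
    (hw : eval w Q = 0) : eval v Q = 0 := by
  obtain ⟨c, rfl⟩ := Submodule.mem_span_singleton.mp hv
  rw [hQ.eval_smul, hw, mul_zero]

theorem eq_zero_of_rename_inl_add_rename_inr_eq_zero {F : MvPolynomial σ R}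
    {G : MvPolynomial τ R} (hG : constantCoeff G = 0)
    (h : rename Sum.inl F + rename Sum.inr G = 0) : F = 0 := by
  have h' := congrArg (aeval (Sum.elim X 0 : σ ⊕ τ → MvPolynomial σ R)) h
  rwa [map_add, aeval_rename, aeval_rename, Sum.elim_comp_inl, Sum.elim_comp_inr,
    aeval_X_left_apply, aeval_zero, hG, map_zero, add_zero, map_zero] at h'

/-- The apolarity pairing `⟨Q, P⟩ = ∑ α! q_α p_α`; for `deg Q = deg P` it is the constant
`Q(∂) P`. -/
noncomputable def apolar (Q : MvPolynomial σ R) : MvPolynomial σ R →ₗ[R] R :=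
  ∑ α ∈ Q.support, (Q.coeff α * ∏ i ∈ α.support, ((α i)! : R)) • lcoeff R α

theorem apolar_apply (Q P : MvPolynomial σ R) :
    apolar Q P =
      ∑ α ∈ Q.support, Q.coeff α * (∏ i ∈ α.support, ((α i)! : R)) * P.coeff α := by
  simp [apolar, LinearMap.sum_apply, mul_assoc]

theorem apolar_sum_smul_X_pow [Fintype σ] {Q : MvPolynomial σ R} {d : ℕ}
    (hQ : Q.IsHomogeneous d) (a : σ → R) :
    apolar Q ((∑ i, a i • X i) ^ d) = d ! * eval a Q := by
  rw [apolar_apply, eval_eq, mul_sum]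
  refine sum_congr rfl fun α hα => ?_
  have hdeg := hQ.degree_eq_sum_deg_support hα
  rw [coeff_linearCombination_X_pow_of_fintype, if_pos (by rw [hdeg]; rfl),
    Finsupp.multinomial_eq, ← cast_prod]
  have hspec : ((∏ i ∈ α.support, (α i)! : ℕ) : R) * multinomial α.support α = d ! := by
    rw [← Nat.cast_mul, Nat.multinomial_spec, ← hdeg]
  rw [← hspec, Finsupp.prod]
  ring

end CommSemiring

end MvPolynomial

section Complex

open Finset Nat

variable {σ : Type*}

-- `L = 0` qualifies vacuously: no point `q` has `q.submodule = span {0}`.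
noncomputable def powerSpan (d : ℕ) (Y : Set (Projectivization ℂ (σ → ℂ))) :
    Submodule ℂ (MvPolynomial σ ℂ) :=
  Submodule.span ℂ {P | ∃ L : MvPolynomial σ ℂ, L.IsHomogeneous 1 ∧ L ^ d = P ∧
    ∀ q : Projectivization ℂ (σ → ℂ),
      q.submodule = Submodule.span ℂ {coeffVec L} → q ∈ Y}

variable [Fintype σ]

theorem MvPolynomial.IsHomogeneous.eq_sum_coeffVec_smul_X {L : MvPolynomial σ ℂ}
    (hL : L.IsHomogeneous 1) : L = ∑ i, coeffVec L i • X i := by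
  classical
  ext β
  simp only [coeff_sum, coeff_smul, coeff_X, smul_eq_mul, mul_ite, mul_one, mul_zero]
  by_cases hβ : β.degree = 1
  · obtain ⟨j, rfl⟩ := (Finsupp.sum_eq_one_iff β).mp hβ
    simp [coeffVec, Finsupp.single_left_inj]
  · rw [hL.coeff_eq_zero hβ, sum_eq_zero]
    rintro i -
    rw [if_neg]
    rintro rfl
    exact hβ (by simp)

theorem coeffVec_ne_zero {L : MvPolynomial σ ℂ} (hL : L.IsHomogeneous 1) (hL0 : L ≠ 0) :
    coeffVec L ≠ 0 := fun h => hL0 (by rw [hL.eq_sum_coeffVec_smul_X, h]; simp)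

theorem MvPolynomial.IsHomogeneous.apolar_pow {Q L : MvPolynomial σ ℂ} {d : ℕ}
    (hQ : Q.IsHomogeneous d) (hL : L.IsHomogeneous 1) :
    apolar Q (L ^ d) = d ! * eval (coeffVec L) Q := by
  have h := apolar_sum_smul_X_pow hQ (coeffVec L)
  rwa [← hL.eq_sum_coeffVec_smul_X] at h

theorem exists_smul_eq_of_span_coeffVec_eq {L M : MvPolynomial σ ℂ} (hL : L.IsHomogeneous 1)
    (hM : M.IsHomogeneous 1)
    (h : Submodule.span ℂ {coeffVec L} = Submodule.span ℂ {coeffVec M}) :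
    ∃ c : ℂ, c • L = M := by
  obtain ⟨c, hc⟩ :=
    Submodule.mem_span_singleton.mp (h ▸ Submodule.mem_span_singleton_self (coeffVec M))
  refine ⟨c, ?_⟩
  conv_rhs => rw [hM.eq_sum_coeffVec_smul_X, ← hc]
  conv_lhs => rw [hL.eq_sum_coeffVec_smul_X]
  simp [smul_sum, smul_smul]

theorem pow_mem_powerSpan_diff {d : ℕ} {Z : Set (Projectivization ℂ (σ → ℂ))}
    {p : Projectivization ℂ (σ → ℂ)} {L M : MvPolynomial σ ℂ} (hL : L.IsHomogeneous 1)
    (hM : M.IsHomogeneous 1) (hpM : p.submodule = Submodule.span ℂ {coeffVec M})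
    (hLM : ¬ ∃ c : ℂ, c • L = M)
    (hLZ : ∀ q : Projectivization ℂ (σ → ℂ),
      q.submodule = Submodule.span ℂ {coeffVec L} → q ∈ Z) :
    L ^ d ∈ powerSpan d (Z \ {p}) :=
  Submodule.subset_span ⟨L, hL, rfl, fun q hq => ⟨hLZ q hq, fun hqp =>
    hLM (exists_smul_eq_of_span_coeffVec_eq hL hM (hq.symm.trans (hqp ▸ hpM)))⟩⟩

theorem not_imposesIndepConditions_of_pow_mem_powerSpan {d : ℕ} (hd : d ≠ 0)
    {Z : Set (Projectivization ℂ (σ → ℂ))} {p : Projectivization ℂ (σ → ℂ)}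
    {M : MvPolynomial σ ℂ} (hM : M.IsHomogeneous 1) (hpZ : p ∈ Z)
    (hpM : p.submodule = Submodule.span ℂ {coeffVec M})
    (hMZ : M ^ d ∈ powerSpan d (Z \ {p})) :
    ¬ ImposesIndepConditions d Z := by
  intro hZ
  obtain ⟨Q, hQ, hQZ, hQp⟩ := hZ p hpZ
  have hker : M ^ d ∈ LinearMap.ker (apolar Q) := by
    refine Submodule.span_le.mpr ?_ hMZ
    rintro _ ⟨L, hL, rfl, hLZ⟩
    rw [SetLike.mem_coe, LinearMap.mem_ker, hQ.apolar_pow hL]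
    by_cases hL0 : coeffVec L = 0
    · rw [hL0, eval_zero, constantCoeff_eq, hQ.coeff_eq_zero (by simpa using hd.symm), mul_zero]
    · obtain ⟨hqZ, hqp⟩ := hLZ _ (Projectivization.submodule_mk _ hL0)
      refine mul_eq_zero_of_right _ (hQ.eval_eq_zero_of_mem_span_singleton ?_ (hQZ _ hqZ hqp))
      rw [← Projectivization.submodule_eq, Projectivization.submodule_mk]
      exact Submodule.mem_span_singleton_self _
  rw [LinearMap.mem_ker, hQ.apolar_pow hM] at hker
  refine hQp (hQ.eval_eq_zero_of_mem_span_singleton ?_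
    ((mul_eq_zero.mp hker).resolve_left (cast_ne_zero.mpr (factorial_ne_zero d))))
  rw [← hpM, Projectivization.submodule_eq]
  exact Submodule.mem_span_singleton_self _

end Complex

theorem stmt6_general (n m d r s t : ℕ) (hd : 1 < d)
    (F : MvPolynomial (Fin (n + 1)) ℂ) (G : MvPolynomial (Fin (m + 1)) ℂ)
    (hF0 : F ≠ 0)
    (hG : G.IsHomogeneous d)
    (Fc : Fin r → MvPolynomial (Fin (n + 1)) ℂ)
    (hFc1 : ∀ i, (Fc i).IsHomogeneous 1) (hFdec : F = ∑ i, (Fc i) ^ d)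
    (Gc : Fin s → MvPolynomial (Fin (m + 1)) ℂ)
    (hGc1 : ∀ j, (Gc j).IsHomogeneous 1) (hGdec : G = ∑ j, (Gc j) ^ d)
    (H : Fin t → MvPolynomial (Fin (n + 1) ⊕ Fin (m + 1)) ℂ)
    (hH1 : ∀ k, (H k).IsHomogeneous 1)
    (hHprop : ∀ k l, k ≠ l → ¬ ∃ c : ℂ, H k = c • H l)
    (hHx : ∀ k, H k ∉
      (rename (Sum.inl : Fin (n + 1) → Fin (n + 1) ⊕ Fin (m + 1)) :
        MvPolynomial (Fin (n + 1)) ℂ →ₐ[ℂ]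
          MvPolynomial (Fin (n + 1) ⊕ Fin (m + 1)) ℂ).range)
    (hHy : ∀ k, H k ∉
      (rename (Sum.inr : Fin (m + 1) → Fin (n + 1) ⊕ Fin (m + 1)) :
        MvPolynomial (Fin (m + 1)) ℂ →ₐ[ℂ]
          MvPolynomial (Fin (n + 1) ⊕ Fin (m + 1)) ℂ).range)
    (hsum : rename (Sum.inl : Fin (n + 1) → Fin (n + 1) ⊕ Fin (m + 1)) F +
        rename (Sum.inr : Fin (m + 1) → Fin (n + 1) ⊕ Fin (m + 1)) G =
      ∑ k, (H k) ^ d) :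
    ¬ ImposesIndepConditions d
      {p : Projectivization ℂ ((Fin (n + 1) ⊕ Fin (m + 1)) → ℂ) |
        (∃ i, p.submodule = Submodule.span ℂ
          {coeffVec (rename (Sum.inl : Fin (n + 1) → Fin (n + 1) ⊕ Fin (m + 1)) (Fc i))}) ∨
        (∃ j, p.submodule = Submodule.span ℂ
          {coeffVec (rename (Sum.inr : Fin (m + 1) → Fin (n + 1) ⊕ Fin (m + 1)) (Gc j))}) ∨
        (∃ k, p.submodule = Submodule.span ℂ {coeffVec (H k)})} := by
  obtain ⟨k₀⟩ : Nonempty (Fin t) := by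
    refine Fin.pos_iff_nonempty.mp (Nat.pos_of_ne_zero fun ht => hF0 ?_)
    subst ht
    refine eq_zero_of_rename_inl_add_rename_inr_eq_zero ?_ (by simpa using hsum)
    rw [constantCoeff_eq, hG.coeff_eq_zero (by rw [map_zero]; omega)]
  have hH₀ : coeffVec (H k₀) ≠ 0 :=
    coeffVec_ne_zero (hH1 k₀) fun h => hHx k₀ ⟨0, by rw [map_zero, h]⟩
  have hp := Projectivization.submodule_mk (K := ℂ) (coeffVec (H k₀)) hH₀
  refine not_imposesIndepConditions_of_pow_mem_powerSpan (by omega) (hH1 k₀)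
    (Or.inr (Or.inr ⟨k₀, hp⟩)) hp ?_
  rw [eq_sub_of_add_eq ((Finset.add_sum_erase _ _ (Finset.mem_univ k₀)).trans hsum.symm), hFdec,
    hGdec, map_sum, map_sum]
  refine sub_mem (add_mem (sum_mem fun i _ => ?_) (sum_mem fun j _ => ?_)) (sum_mem fun k hk => ?_)
  · rw [map_pow]
    exact pow_mem_powerSpan_diff (hFc1 i).rename_isHomogeneous (hH1 k₀) hp
      (fun ⟨c, hc⟩ => hHx k₀ ((AlgHom.mem_range _).mpr ⟨c • Fc i, by rw [map_smul, hc]⟩))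
      fun q hq => Or.inl ⟨i, hq⟩
  · rw [map_pow]
    exact pow_mem_powerSpan_diff (hGc1 j).rename_isHomogeneous (hH1 k₀) hp
      (fun ⟨c, hc⟩ => hHy k₀ ((AlgHom.mem_range _).mpr ⟨c • Gc j, by rw [map_smul, hc]⟩))
      fun q hq => Or.inr (Or.inl ⟨j, hq⟩)
  · exact pow_mem_powerSpan_diff (hH1 k) (hH1 k₀) hp
      (fun ⟨c, hc⟩ => hHprop k₀ k (Finset.ne_of_mem_erase hk).symm ⟨c, hc.symm⟩)
      fun q hq => Or.inr (Or.inr ⟨k, hq⟩)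

/-- If `F + G` admits a too-short Waring decomposition `∑ Hₖ^d`, then the set
`Z = Z(F) ∪ Z(G) ∪ Z(H)` of projective points determined by the linear forms of the
minimal decompositions of `F`, `G` and by the `Hₖ` does not impose independent
conditions on degree-`d` forms. -/
theorem stmt6 (n m d r s t : ℕ) (hd : 1 < d)
    (F : MvPolynomial (Fin (n + 1)) ℂ) (G : MvPolynomial (Fin (m + 1)) ℂ)
    (hF0 : F ≠ 0) (hG0 : G ≠ 0)
    (hF : F.IsHomogeneous d) (hG : G.IsHomogeneous d)
    (hr : waringRank d F = r) (hs : waringRank d G = s)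
    (Fc : Fin r → MvPolynomial (Fin (n + 1)) ℂ)
    (hFc1 : ∀ i, (Fc i).IsHomogeneous 1) (hFdec : F = ∑ i, (Fc i) ^ d)
    (Gc : Fin s → MvPolynomial (Fin (m + 1)) ℂ)
    (hGc1 : ∀ j, (Gc j).IsHomogeneous 1) (hGdec : G = ∑ j, (Gc j) ^ d)
    (H : Fin t → MvPolynomial (Fin (n + 1) ⊕ Fin (m + 1)) ℂ)
    (hH1 : ∀ k, (H k).IsHomogeneous 1)
    (ht : t < r + s)
    (hHprop : ∀ k l, k ≠ l → ¬ ∃ c : ℂ, H k = c • H l)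
    (hHx : ∀ k, H k ∉
      (rename (Sum.inl : Fin (n + 1) → Fin (n + 1) ⊕ Fin (m + 1)) :
        MvPolynomial (Fin (n + 1)) ℂ →ₐ[ℂ]
          MvPolynomial (Fin (n + 1) ⊕ Fin (m + 1)) ℂ).range)
    (hHy : ∀ k, H k ∉
      (rename (Sum.inr : Fin (m + 1) → Fin (n + 1) ⊕ Fin (m + 1)) :
        MvPolynomial (Fin (m + 1)) ℂ →ₐ[ℂ]
          MvPolynomial (Fin (n + 1) ⊕ Fin (m + 1)) ℂ).range)
    (hsum : rename (Sum.inl : Fin (n + 1) → Fin (n + 1) ⊕ Fin (m + 1)) F +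
        rename (Sum.inr : Fin (m + 1) → Fin (n + 1) ⊕ Fin (m + 1)) G =
      ∑ k, (H k) ^ d) :
    ¬ ImposesIndepConditions d
      {p : Projectivization ℂ ((Fin (n + 1) ⊕ Fin (m + 1)) → ℂ) |
        (∃ i, p.submodule = Submodule.span ℂ
          {coeffVec (rename (Sum.inl : Fin (n + 1) → Fin (n + 1) ⊕ Fin (m + 1)) (Fc i))}) ∨
        (∃ j, p.submodule = Submodule.span ℂ
          {coeffVec (rename (Sum.inr : Fin (m + 1) → Fin (n + 1) ⊕ Fin (m + 1)) (Gc j))}) ∨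
        (∃ k, p.submodule = Submodule.span ℂ {coeffVec (H k)})} :=
  stmt6_general n m d r s t hd F G hF0 hG Fc hFc1 hFdec Gc hGc1 hGdec H hH1 hHprop hHx hHy hsum
end

section
/- Let W be a set of w distinct points in projective space ℙ^N over ℂ spanning a linear subspace of projective dimension at least 3. If w ≤ 2u − 2 and W does not impose independent conditions on degree-(u−2) forms, then there exists a line in ℙ^N containing at least u points of W. -/
/-!
Fix `p ∈ W` and put `Y = W \ {p}`, `k = u - 2`. If no line carries `u` points of `W`, every
line through `p` contains at most `k` points of `Y`, and `#Y ≤ 2k + 1`. It then suffices to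
cover `Y` by `k` hyperplanes missing `p`: the product of their equations is the required form.
Greedily, the hyperplane through a point `a` on a longest line through `p` and a point `b` on a
longest line among the others misses `p`, and deleting `a` and `b` leaves at most `2(k - 1)`
points, at most `k - 1` on each line through `p`. When `#Y = 2k + 1` the first hyperplane also
passes through a point `c` off the plane `⟨p, a, b⟩`, which exists because `W` spans at least
a `ℙ³`.
-/

open MvPolynomial
open scoped LinearAlgebra.Projectivization

theorem Set.ncard_add_ncard_add_ncard_le {α : Type*} {A B C S : Set α} (hS : S.Finite)
    (hAS : A ⊆ S) (hBS : B ⊆ S) (hCS : C ⊆ S)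
    (hAB : Disjoint A B) (hAC : Disjoint A C) (hBC : Disjoint B C) :
    A.ncard + B.ncard + C.ncard ≤ S.ncard := by
  rw [← Set.ncard_union_eq hAB (hS.subset hAS) (hS.subset hBS),
    ← Set.ncard_union_eq (hAC.union_left hBC) ((hS.subset hAS).union (hS.subset hBS))
      (hS.subset hCS)]
  exact Set.ncard_le_ncard (Set.union_subset (Set.union_subset hAS hBS) hCS) hS

namespace Projectivization

variable {K V : Type*} [Field K] [AddCommGroup V] [Module K V]

theorem submodule_le_iff_rep_mem {x : ℙ K V} {U : Submodule K V} :
    x.submodule ≤ U ↔ x.rep ∈ U := by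
  rw [submodule_eq, Submodule.span_singleton_le_iff_mem]

theorem submodule_le_submodule_iff {x y : ℙ K V} : x.submodule ≤ y.submodule ↔ x = y := by
  rw [submodule_le_iff_rep_mem, submodule_eq, Submodule.mem_span_singleton]
  conv_rhs => rw [← x.mk_rep, ← y.mk_rep, mk_eq_mk_iff']

theorem submodule_le_sup_exchange {x y : ℙ K V} {U : Submodule K V}
    (h : x.submodule ≤ y.submodule ⊔ U) (hx : ¬ x.submodule ≤ U) :
    y.submodule ≤ x.submodule ⊔ U := by
  have key (v : V) : K ∙ v ⊔ U = Submodule.span K (insert v U) := by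
    rw [Submodule.span_insert, Submodule.span_eq]
  rw [submodule_le_iff_rep_mem, submodule_eq, key] at h ⊢
  rw [submodule_le_iff_rep_mem, ← U.span_eq] at hx
  exact mem_span_insert_exchange h hx

theorem sup_submodule_eq_of_le {x y z : ℙ K V} (h : z.submodule ≤ x.submodule ⊔ y.submodule)
    (hzx : z ≠ x) : x.submodule ⊔ z.submodule = x.submodule ⊔ y.submodule := by
  refine le_antisymm (sup_le le_sup_left h) (sup_le le_sup_left ?_)
  rw [sup_comm] at h ⊢
  exact submodule_le_sup_exchange h (mt submodule_le_submodule_iff.1 hzx)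

theorem finrank_sup_submodule {x y : ℙ K V} (h : x ≠ y) :
    Module.finrank K ↥(x.submodule ⊔ y.submodule) = 2 := by
  have hinf : Module.finrank K ↥(x.submodule ⊓ y.submodule) < 1 := by
    rw [← x.finrank_submodule]
    exact Submodule.finrank_lt_finrank_of_lt
      (inf_lt_left.2 (mt submodule_le_submodule_iff.1 h))
  have := Submodule.finrank_sup_add_finrank_inf_eq x.submodule y.submodule
  rw [finrank_submodule, finrank_submodule] at this
  omega

theorem exists_not_le_sup_sup {Y : Set (ℙ K V)} {p a b : ℙ K V}
    (hspan : 4 ≤ Module.finrank K ↥(⨆ q ∈ insert p Y, q.submodule)) :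
    ∃ c ∈ Y, ¬ c.submodule ≤ p.submodule ⊔ (a.submodule ⊔ b.submodule) := by
  by_contra! h
  have hle :
      (⨆ q ∈ insert p Y, q.submodule) ≤ p.submodule ⊔ (a.submodule ⊔ b.submodule) := by
    refine iSup₂_le fun q hq ↦ ?_
    rcases hq with rfl | hq
    · exact le_sup_left
    · exact h q hq
  have h3 : Module.finrank K ↥(p.submodule ⊔ (a.submodule ⊔ b.submodule)) ≤ 3 := calc
    _ ≤ Module.finrank K p.submodule + Module.finrank K ↥(a.submodule ⊔ b.submodule) :=
      Submodule.finrank_add_le_finrank_add_finrank _ _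
    _ ≤ 1 + (1 + 1) := by
      grw [Submodule.finrank_add_le_finrank_add_finrank, finrank_submodule, finrank_submodule,
        finrank_submodule]
  have := Submodule.finrank_mono hle
  omega

def pointsOnLine (Y : Set (ℙ K V)) (p y : ℙ K V) : Set (ℙ K V) :=
  {z ∈ Y | z.submodule ≤ p.submodule ⊔ y.submodule}

section pointsOnLine

variable {Y T : Set (ℙ K V)} {p y z : ℙ K V}

theorem pointsOnLine_subset : pointsOnLine Y p y ⊆ Y := fun _ hz ↦ hz.1

theorem mem_pointsOnLine_self (hy : y ∈ Y) : y ∈ pointsOnLine Y p y :=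
  ⟨hy, le_sup_right⟩

theorem pointsOnLine_sdiff : pointsOnLine (Y \ T) p y = pointsOnLine Y p y \ T := by
  ext z
  simp only [pointsOnLine, Set.mem_sdiff, Set.mem_ofPred_eq]
  tauto

theorem pointsOnLine_eq (hp : p ∉ Y) (hz : z ∈ pointsOnLine Y p y) :
    pointsOnLine Y p z = pointsOnLine Y p y := by
  have hzp : z ≠ p := fun h ↦ hp (h ▸ hz.1)
  simp only [pointsOnLine, sup_submodule_eq_of_le hz.2 hzp]

theorem disjoint_pointsOnLine (hp : p ∉ Y) (hzy : z ∉ pointsOnLine Y p y) (hz : z ∈ Y) :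
    Disjoint (pointsOnLine Y p z) (pointsOnLine Y p y) := by
  refine Set.disjoint_left.2 fun x hxz hxy ↦ hzy ?_
  rw [← pointsOnLine_eq hp hxy, pointsOnLine_eq hp hxz]
  exact mem_pointsOnLine_self hz

theorem ncard_pointsOnLine_sdiff_le (hfin : Y.Finite) :
    (pointsOnLine (Y \ T) p y).ncard ≤ (pointsOnLine Y p y).ncard := by
  rw [pointsOnLine_sdiff]
  exact Set.ncard_le_ncard Set.sdiff_subset (hfin.subset pointsOnLine_subset)

theorem ncard_pointsOnLine_sdiff_lt (hfin : Y.Finite) (hp : p ∉ Y) {t : ℙ K V} (ht : t ∈ Y)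
    (htT : t ∈ T) (hy : y ∈ pointsOnLine Y p t) :
    (pointsOnLine (Y \ T) p y).ncard < (pointsOnLine Y p t).ncard := by
  rw [pointsOnLine_sdiff, pointsOnLine_eq hp hy]
  exact Set.ncard_lt_ncard (Set.sdiff_ssubset_left_iff.2 ⟨t, mem_pointsOnLine_self ht, htT⟩)
    (hfin.subset pointsOnLine_subset)

theorem ncard_pointsOnLine_sdiff_singleton_add_one (hfin : Y.Finite) (hp : p ∈ Y) :
    (pointsOnLine (Y \ {p}) p y).ncard + 1 =
      {q ∈ Y | q.submodule ≤ p.submodule ⊔ y.submodule}.ncard := by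
  rw [← Set.ncard_insert_of_notMem (fun h ↦ (pointsOnLine_subset h).2 (Set.mem_singleton p))
    (hfin.sdiff.subset pointsOnLine_subset)]
  congr 1
  ext q
  by_cases hqp : q = p
  · subst hqp
    simpa using hp
  · simp [pointsOnLine, hqp]

end pointsOnLine

structure IsTopTwo (Y : Set (ℙ K V)) (p a b : ℙ K V) : Prop where
  left_mem : a ∈ Y
  right_mem : b ∈ Y
  right_notMem : b ∉ pointsOnLine Y p a
  le_left : ∀ y ∈ Y, (pointsOnLine Y p y).ncard ≤ (pointsOnLine Y p a).ncard
  le_right : ∀ y ∈ Y, y ∉ pointsOnLine Y p a →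
    (pointsOnLine Y p y).ncard ≤ (pointsOnLine Y p b).ncard

section IsTopTwo

variable {Y : Set (ℙ K V)} {p a b c : ℙ K V}

theorem exists_isTopTwo (hfin : Y.Finite) (ha : a ∈ Y)
    (hamax : ∀ y ∈ Y, (pointsOnLine Y p y).ncard ≤ (pointsOnLine Y p a).ncard)
    (hYa : ¬ Y ⊆ pointsOnLine Y p a) : ∃ b, IsTopTwo Y p a b := by
  obtain ⟨b, hb, hbmax⟩ := Set.exists_max_image (Y \ pointsOnLine Y p a)
    (fun y ↦ (pointsOnLine Y p y).ncard) hfin.sdiff (Set.nonempty_of_not_subset hYa)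
  exact ⟨b, ha, hb.1, hb.2, hamax, fun y hy hya ↦ hbmax y ⟨hy, hya⟩⟩

theorem IsTopTwo.not_le_sup (h : IsTopTwo Y p a b) (hp : p ∉ Y) :
    ¬ p.submodule ≤ a.submodule ⊔ b.submodule := by
  intro hpab
  have hpa : ¬ p.submodule ≤ a.submodule := fun hle ↦
    hp (submodule_le_submodule_iff.1 hle ▸ h.left_mem)
  rw [sup_comm] at hpab
  exact h.right_notMem ⟨h.right_mem, submodule_le_sup_exchange hpab hpa⟩

theorem IsTopTwo.sdiff_singleton (hfin : Y.Finite) (h : IsTopTwo Y p a b)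
    (hca : c ∉ pointsOnLine Y p a) (hcb : c ∉ pointsOnLine Y p b) :
    IsTopTwo (Y \ {c}) p a b := by
  obtain ⟨ha, hb, hba, hamax, hbmax⟩ := h
  have hline {x : ℙ K V} (hcx : c ∉ pointsOnLine Y p x) :
      pointsOnLine (Y \ {c}) p x = pointsOnLine Y p x := by
    rw [pointsOnLine_sdiff, Set.sdiff_singleton_eq_self hcx]
  refine ⟨⟨ha, fun hac : a = c ↦ hca (hac ▸ mem_pointsOnLine_self ha)⟩,
    ⟨hb, fun hbc : b = c ↦ hcb (hbc ▸ mem_pointsOnLine_self hb)⟩,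
    by rwa [hline hca], fun y hy ↦ ?_, fun y hy hya ↦ ?_⟩
  · rw [hline hca]
    exact (ncard_pointsOnLine_sdiff_le hfin).trans (hamax y hy.1)
  · rw [hline hcb]
    rw [hline hca] at hya
    exact (ncard_pointsOnLine_sdiff_le hfin).trans (hbmax y hy.1 hya)

theorem IsTopTwo.ncard_pointsOnLine_sdiff_pair_le (h : IsTopTwo Y p a b) (hfin : Y.Finite)
    (hp : p ∉ Y) {k : ℕ} (hcard : Y.ncard ≤ 2 * (k + 1))
    (hline : ∀ y ∈ Y, (pointsOnLine Y p y).ncard ≤ k + 1) :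
    (Y \ {a, b}).ncard ≤ 2 * k ∧
      ∀ y ∈ Y \ {a, b}, (pointsOnLine (Y \ {a, b}) p y).ncard ≤ k := by
  obtain ⟨ha, hb, hba, hamax, hbmax⟩ := h
  have hab : a ≠ b := fun hab ↦ hba (hab ▸ mem_pointsOnLine_self ha)
  refine ⟨?_, fun y hy ↦ ?_⟩
  · rw [Set.ncard_sdiff (Set.pair_subset ha hb), Set.ncard_pair hab]
    omega
  have hyY : y ∈ Y := hy.1
  by_cases hya : y ∈ pointsOnLine Y p a
  · have := ncard_pointsOnLine_sdiff_lt hfin hp ha (Set.mem_insert a {b}) hya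
    have := hline a ha
    omega
  by_cases hyb : y ∈ pointsOnLine Y p b
  · have := ncard_pointsOnLine_sdiff_lt hfin hp hb
      (Set.mem_insert_of_mem a (Set.mem_singleton b)) hyb
    have := hline b hb
    omega
  -- `y` lies on a third line, no longer than the disjoint lines through `b` and `a`, so three
  -- times its length is at most `#Y ≤ 2k + 2`
  have hsum := Set.ncard_add_ncard_add_ncard_le hfin pointsOnLine_subset pointsOnLine_subset
    pointsOnLine_subset (disjoint_pointsOnLine hp hyb hyY) (disjoint_pointsOnLine hp hya hyY)
    (disjoint_pointsOnLine hp hba hb)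
  have hpos : 0 < (pointsOnLine Y p y).ncard :=
    (Set.ncard_pos (hfin.subset pointsOnLine_subset)).2 ⟨y, mem_pointsOnLine_self hyY⟩
  have := ncard_pointsOnLine_sdiff_le (T := {a, b}) (p := p) (y := y) hfin
  have := hbmax y hyY hya
  have := hamax b hb
  omega

end IsTopTwo

end Projectivization

section Separation

open Projectivization

variable {K σ : Type*} [Field K]

def SeparatedInDegree (j : ℕ) (S : Set (ℙ K (σ → K))) (p : ℙ K (σ → K)) : Prop :=
  ∃ Q : MvPolynomial σ K, Q.IsHomogeneous j ∧ (∀ q ∈ S, eval q.rep Q = 0) ∧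
    eval p.rep Q ≠ 0

namespace SeparatedInDegree

variable {j j' : ℕ} {S S' : Set (ℙ K (σ → K))} {p : ℙ K (σ → K)}

theorem union (h : SeparatedInDegree j S p) (h' : SeparatedInDegree j' S' p) :
    SeparatedInDegree (j + j') (S ∪ S') p := by
  obtain ⟨Q, hQ, hQS, hQp⟩ := h
  obtain ⟨Q', hQ', hQS', hQp'⟩ := h'
  refine ⟨Q * Q', hQ.mul hQ', ?_, by simp [hQp, hQp']⟩
  rintro q (hq | hq) <;> simp [hQS, hQS', hq]

theorem of_sdiff (h : SeparatedInDegree j S p) (h' : SeparatedInDegree j' (S' \ S) p)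
    (hS : S ⊆ S') : SeparatedInDegree (j + j') S' p := by
  simpa [Set.union_sdiff_cancel hS] using h.union h'

end SeparatedInDegree

theorem separatedInDegree_one_of_le [Fintype σ] {S : Set (ℙ K (σ → K))} {p : ℙ K (σ → K)}
    {U : Submodule K (σ → K)} (hS : ∀ q ∈ S, q.submodule ≤ U) (hp : ¬ p.submodule ≤ U) :
    SeparatedInDegree 1 S p := by
  classical
  rw [Projectivization.submodule_le_iff_rep_mem] at hp
  obtain ⟨f, hfp, hfU⟩ := Submodule.exists_dual_map_eq_bot_of_notMem hp inferInstance
  have eval_eq (v : σ → K) :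
      eval v (∑ i, C (f fun j ↦ if i = j then 1 else 0) * X i) = f v := by
    simp [f.pi_apply_eq_sum_univ v, mul_comm]
  refine ⟨∑ i, C (f fun j ↦ if i = j then 1 else 0) * X i,
    IsHomogeneous.sum _ _ _ fun i _ ↦ isHomogeneous_C_mul_X _ i, fun q hq ↦ ?_,
    by rwa [eval_eq]⟩
  rw [eval_eq, ← Submodule.mem_bot K, ← hfU]
  exact Submodule.mem_map_of_mem (Projectivization.submodule_le_iff_rep_mem.1 (hS q hq))

variable [Fintype σ] {Y : Set (ℙ K (σ → K))} {p : ℙ K (σ → K)}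

theorem exists_separatedInDegree_one_sdiff (hfin : Y.Finite) (hp : p ∉ Y) {k : ℕ}
    (hcard : Y.ncard ≤ 2 * (k + 1)) (hline : ∀ y ∈ Y, (pointsOnLine Y p y).ncard ≤ k + 1) :
    ∃ T ⊆ Y, SeparatedInDegree 1 T p ∧ (Y \ T).ncard ≤ 2 * k ∧
      ∀ y ∈ Y \ T, (pointsOnLine (Y \ T) p y).ncard ≤ k := by
  rcases Y.eq_empty_or_nonempty with rfl | hne
  · refine ⟨∅, le_rfl, separatedInDegree_one_of_le (U := ⊥) (fun q hq ↦ hq.elim) ?_,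
      by simp, by simp⟩
    rw [submodule_le_iff_rep_mem, Submodule.mem_bot]
    exact p.rep_nonzero
  obtain ⟨a, ha, hamax⟩ := Y.exists_max_image (fun y ↦ (pointsOnLine Y p y).ncard) hfin hne
  by_cases hYa : Y ⊆ pointsOnLine Y p a
  · have hpa : ¬ p.submodule ≤ a.submodule := by
      rw [submodule_le_submodule_iff]
      rintro rfl
      exact hp ha
    have hYcard := Set.ncard_le_ncard hYa (hfin.subset pointsOnLine_subset)
    have hacard := hline a ha
    refine ⟨{a}, Set.singleton_subset_iff.2 ha,
      separatedInDegree_one_of_le (fun q hq ↦ hq ▸ le_rfl) hpa, ?_, fun y hy ↦ ?_⟩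
    · rw [Set.ncard_sdiff_singleton_of_mem ha]
      omega
    · have := ncard_pointsOnLine_sdiff_lt hfin hp ha (Set.mem_singleton a) (hYa hy.1)
      omega
  obtain ⟨b, hab⟩ := exists_isTopTwo hfin ha hamax hYa
  refine ⟨{a, b}, Set.pair_subset ha hab.right_mem,
    separatedInDegree_one_of_le ?_ (hab.not_le_sup hp),
    hab.ncard_pointsOnLine_sdiff_pair_le hfin hp hcard hline⟩
  rintro q (rfl | rfl)
  exacts [le_sup_left, le_sup_right]

theorem separatedInDegree_of_ncard_le_two_mul {k : ℕ} (hfin : Y.Finite) (hp : p ∉ Y)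
    (hcard : Y.ncard ≤ 2 * k) (hline : ∀ y ∈ Y, (pointsOnLine Y p y).ncard ≤ k) :
    SeparatedInDegree k Y p := by
  induction k generalizing Y with
  | zero =>
    rw [(Set.ncard_eq_zero hfin).1 (by omega)]
    exact ⟨1, isHomogeneous_one _ _, by simp, by simp⟩
  | succ k ih =>
    obtain ⟨T, hTY, hT, hcard', hline'⟩ :=
      exists_separatedInDegree_one_sdiff hfin hp hcard hline
    simpa only [add_comm] using hT.of_sdiff (ih hfin.sdiff (fun h ↦ hp h.1) hcard' hline') hTY

theorem separatedInDegree_of_ncard_le_two_mul_add_one {k : ℕ} (hfin : Y.Finite) (hp : p ∉ Y)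
    (hcard : Y.ncard ≤ 2 * k + 1) (hline : ∀ y ∈ Y, (pointsOnLine Y p y).ncard ≤ k)
    (hspan : 4 ≤ Module.finrank K ↥(⨆ q ∈ insert p Y, q.submodule)) :
    SeparatedInDegree k Y p := by
  rcases le_or_gt Y.ncard (2 * k) with heven | hodd
  · exact separatedInDegree_of_ncard_le_two_mul hfin hp heven hline
  obtain ⟨a, ha, hamax⟩ := Y.exists_max_image (fun y ↦ (pointsOnLine Y p y).ncard) hfin
    (Set.nonempty_of_ncard_ne_zero (by omega))
  have hapos : 0 < (pointsOnLine Y p a).ncard :=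
    (Set.ncard_pos (hfin.subset pointsOnLine_subset)).2 ⟨a, mem_pointsOnLine_self ha⟩
  obtain ⟨k, rfl⟩ := Nat.exists_eq_add_one.2 (hapos.trans_le (hline a ha))
  have hYa : ¬ Y ⊆ pointsOnLine Y p a := fun hYa ↦ by
    have := Set.ncard_le_ncard hYa (hfin.subset pointsOnLine_subset)
    have := hline a ha
    omega
  obtain ⟨b, hab⟩ := exists_isTopTwo hfin ha hamax hYa
  obtain ⟨c, hc, hc_plane⟩ := exists_not_le_sup_sup (a := a) (b := b) hspan
  have hca : c ∉ pointsOnLine Y p a := fun h ↦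
    hc_plane (h.2.trans (sup_le_sup_left le_sup_left _))
  have hcb : c ∉ pointsOnLine Y p b := fun h ↦
    hc_plane (h.2.trans (sup_le_sup_left le_sup_right _))
  have hT : SeparatedInDegree 1 {c, a, b} p := by
    refine separatedInDegree_one_of_le (U := c.submodule ⊔ (a.submodule ⊔ b.submodule)) ?_
      fun h ↦ hc_plane (submodule_le_sup_exchange h (hab.not_le_sup hp))
    rintro q (rfl | rfl | rfl)
    exacts [le_sup_left, le_sup_left.trans le_sup_right, le_sup_right.trans le_sup_right]
  obtain ⟨hcard', hline'⟩ := (hab.sdiff_singleton hfin hca hcb).ncard_pointsOnLine_sdiff_pair_le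
    hfin.sdiff (fun h ↦ hp h.1) (by rw [Set.ncard_sdiff_singleton_of_mem hc]; omega)
    fun y hy ↦ (ncard_pointsOnLine_sdiff_le hfin).trans (hline y hy.1)
  rw [Set.sdiff_sdiff, Set.singleton_union] at hcard' hline'
  simpa only [add_comm] using hT.of_sdiff
    (separatedInDegree_of_ncard_le_two_mul hfin.sdiff (fun h ↦ hp h.1) hcard' hline')
    (Set.insert_subset hc (Set.pair_subset ha hab.right_mem))

end Separation

/-- If `w ≤ 2u - 2` points spanning at least a `ℙ³` fail to impose independent
conditions in degree `u - 2`, then some line contains at least `u` of them. -/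
theorem stmt8 (N w u : ℕ)
    (W : Set (Projectivization ℂ (Fin (N + 1) → ℂ)))
    (hWfin : W.Finite) (hWcard : W.ncard = w)
    (hspan : 4 ≤ Module.finrank ℂ ↥(⨆ p ∈ W, Projectivization.submodule p))
    (hw : w ≤ 2 * u - 2)
    (hW : ¬ ImposesIndepConditions (u - 2) W) :
    ∃ E : Submodule ℂ (Fin (N + 1) → ℂ), Module.finrank ℂ E = 2 ∧
      u ≤ {p ∈ W | p.submodule ≤ E}.ncard := by
  by_contra! hcon
  refine hW fun p hp ↦ ?_
  have hpY : p ∉ W \ {p} := fun h ↦ h.2 rfl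
  have hline :
      ∀ y ∈ W \ {p}, (Projectivization.pointsOnLine (W \ {p}) p y).ncard ≤ u - 2 := by
    intro y hy
    have := Projectivization.ncard_pointsOnLine_sdiff_singleton_add_one (y := y) hWfin hp
    have := hcon _ (Projectivization.finrank_sup_submodule (Ne.symm hy.2))
    omega
  have hcard : (W \ {p}).ncard ≤ 2 * (u - 2) + 1 := by
    rw [Set.ncard_sdiff_singleton_of_mem hp]
    omega
  rw [← Set.insert_eq_of_mem hp, ← Set.insert_sdiff_singleton] at hspan
  obtain ⟨Q, hQ, hQY, hQp⟩ :=
    separatedInDegree_of_ncard_le_two_mul_add_one hWfin.sdiff hpY hcard hline hspan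
  exact ⟨Q, hQ, fun q hq hqp ↦ hQY q ⟨hq, hqp⟩, hQp⟩
end

section
/- Let d > 1 and let F ∈ ℂ[x_0,x_1] and G ∈ ℂ[y_0,y_1] be binary forms of degree d in disjoint pairs of variables, each of Waring rank at least 3. If F + G = H_1^d + ⋯ + H_t^d for linear forms H_i ∈ ℂ[x_0,x_1,y_0,y_1], then the linear forms H_1,…,H_t span the full 4-dimensional space of linear forms in x_0,x_1,y_0,y_1; equivalently, no plane of ℙ^3 contains all the points [H_1],…,[H_t]. -/
/-!
If the `H i` do not span, some linear functional `f` kills every `H i` but not the variable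
`X j`; write `p = (a, b)` for the point with coordinates `f (X k)`. Each `H i` vanishes at `p`,
so `∑ Hᵢ^d`, hence `F(x) + G(y)`, is invariant under `(x, y) ↦ (x + s a, y + s b)`.
Homogeneity then decouples this into `F(x + s a) = F(x) + s^d F(a)` and the same for `G`.
Whichever of `a`, `b` is nonzero (the one containing coordinate `j`) gives a basis `(e, a)`
of `ℂ²` in which `F(u e + v a) = u^d F(e) + v^d F(a)`, so that form has Waring rank at most 2.
-/

open MvPolynomial

namespace MvPolynomial.IsHomogeneous

variable {R σ : Type*} [CommSemiring R] {P : MvPolynomial σ R}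

theorem eval_smul_s12 {n : ℕ} (hP : P.IsHomogeneous n) (t : R) (x : σ → R) :
    eval (t • x) P = t ^ n * eval x P := by
  simp only [eval_eq, Finset.mul_sum]
  refine Finset.sum_congr rfl fun m hm => ?_
  simp only [Pi.smul_apply, smul_eq_mul, mul_pow, Finset.prod_mul_distrib,
    Finset.prod_pow_eq_pow_sum, ← hP.degree_eq_sum_deg_support hm]
  ring

theorem eval_zero {n : ℕ} (hP : P.IsHomogeneous n) (hn : n ≠ 0) : eval 0 P = 0 := by
  simpa [zero_pow hn] using hP.eval_smul_s12 0 0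

theorem eval_add_of_degree_one (hP : P.IsHomogeneous 1) (x y : σ → R) :
    eval (x + y) P = eval x P + eval y P := by
  rw [← mem_homogeneousSubmodule, homogeneousSubmodule_one_eq_span_X] at hP
  exact LinearMap.eqOn_span (f := (MvPolynomial.aeval (x + y)).toLinearMap)
    (g := (MvPolynomial.aeval x).toLinearMap + (MvPolynomial.aeval y).toLinearMap)
    (by rintro _ ⟨k, rfl⟩; simp) hP

theorem eval_eq_dual_of_degree_one (hP : P.IsHomogeneous 1)
    (f : Module.Dual R (MvPolynomial σ R)) : eval (fun k => f (X k)) P = f P := by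
  rw [← mem_homogeneousSubmodule, homogeneousSubmodule_one_eq_span_X] at hP
  exact LinearMap.eqOn_span (f := (MvPolynomial.aeval fun k => f (X k)).toLinearMap) (g := f)
    (by rintro _ ⟨k, rfl⟩; simp) hP

end MvPolynomial.IsHomogeneous

theorem waringRank_le_of_forall_eval {σ : Type*} {d r : ℕ} {P : MvPolynomial σ ℂ}
    (L : Fin r → MvPolynomial σ ℂ) (hL : ∀ k, (L k).IsHomogeneous 1)
    (h : ∀ x, eval x P = ∑ k, eval x (L k) ^ d) : waringRank d P ≤ r :=
  Nat.sInf_le ⟨L, hL, MvPolynomial.funext fun x => by simp [h]⟩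

theorem waringRank_le_two_of_forall_eval {σ : Type*} {d : ℕ} (hd : d ≠ 0)
    {P u v : MvPolynomial σ ℂ} (hu : u.IsHomogeneous 1) (hv : v.IsHomogeneous 1) (c₁ c₂ : ℂ)
    (h : ∀ x, eval x P = c₁ * eval x u ^ d + c₂ * eval x v ^ d) : waringRank d P ≤ 2 := by
  obtain ⟨r₁, hr₁⟩ := IsAlgClosed.exists_pow_nat_eq c₁ (Nat.pos_of_ne_zero hd)
  obtain ⟨r₂, hr₂⟩ := IsAlgClosed.exists_pow_nat_eq c₂ (Nat.pos_of_ne_zero hd)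
  refine waringRank_le_of_forall_eval ![C r₁ * u, C r₂ * v] ?_ fun x => ?_
  · intro k
    fin_cases k
    exacts [hu.C_mul r₁, hv.C_mul r₂]
  · simp [h, mul_pow, hr₁, hr₂]

theorem exists_det_fin_two_ne_zero {K : Type*} [Field K] {a : Fin 2 → K} (ha : a ≠ 0) :
    ∃ e : Fin 2 → K, a 0 * e 1 - a 1 * e 0 ≠ 0 := by
  by_cases h₀ : a 0 = 0
  · refine ⟨![1, 0], ?_⟩
    have h₁ : a 1 ≠ 0 := fun h₁ => ha (by ext k; fin_cases k <;> simp [h₀, h₁])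
    simpa using h₁
  · exact ⟨![0, 1], by simpa using h₀⟩

theorem waringRank_le_two_of_eval_add_smul {d : ℕ} (hd : d ≠ 0) {F : MvPolynomial (Fin 2) ℂ}
    (hF : F.IsHomogeneous d) {a : Fin 2 → ℂ} (ha : a ≠ 0)
    (h : ∀ (x : Fin 2 → ℂ) (s : ℂ), eval (x + s • a) F = eval x F + s ^ d * eval a F) :
    waringRank d F ≤ 2 := by
  obtain ⟨e, he⟩ := exists_det_fin_two_ne_zero ha
  set D := a 0 * e 1 - a 1 * e 0
  -- Cramer's rule: the coordinates of `x` in the basis `(e, a)`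
  set u : MvPolynomial (Fin 2) ℂ := C D⁻¹ * (C (a 0) * X 1 - C (a 1) * X 0)
  set v : MvPolynomial (Fin 2) ℂ := C D⁻¹ * (C (e 1) * X 0 - C (e 0) * X 1)
  have hu : u.IsHomogeneous 1 :=
    ((isHomogeneous_C_mul_X _ _).sub (isHomogeneous_C_mul_X _ _)).C_mul _
  have hv : v.IsHomogeneous 1 :=
    ((isHomogeneous_C_mul_X _ _).sub (isHomogeneous_C_mul_X _ _)).C_mul _
  refine waringRank_le_two_of_forall_eval hd hu hv (eval e F) (eval a F) fun x => ?_
  have hx : x = eval x u • e + eval x v • a := by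
    ext k
    fin_cases k <;> simp [u, v] <;> field_simp <;> ring
  calc eval x F = eval (eval x u • e + eval x v • a) F := by rw [← hx]
    _ = eval (eval x u • e) F + eval x v ^ d * eval a F := h _ _
    _ = _ := by rw [hF.eval_smul_s12]; ring

theorem MvPolynomial.eval_sum_pow_add_smul_of_eval_eq_zero {ι σ R : Type*} [Fintype ι]
    [CommSemiring R] {H : ι → MvPolynomial σ R} (hH : ∀ i, (H i).IsHomogeneous 1)
    {p : σ → R} (hp : ∀ i, eval p (H i) = 0) (d : ℕ) (z : σ → R) (s : R) :
    eval (z + s • p) (∑ i, H i ^ d) = eval z (∑ i, H i ^ d) := by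
  simp only [map_sum, map_pow, (hH _).eval_add_of_degree_one, (hH _).eval_smul_s12, hp,
    mul_zero, add_zero]

theorem MvPolynomial.eval_add_smul_of_eval_add_add {R σ τ : Type*} [CommRing R] {d : ℕ}
    (hd : d ≠ 0) {F : MvPolynomial σ R} {G : MvPolynomial τ R} (hF : F.IsHomogeneous d)
    (hG : G.IsHomogeneous d) {a : σ → R} {b : τ → R}
    (h : ∀ x y (s : R), eval (x + s • a) F + eval (y + s • b) G = eval x F + eval y G)
    (x : σ → R) (s : R) : eval (x + s • a) F = eval x F + s ^ d * eval a F := by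
  have hab := h 0 0 1
  have hx := h x 0 s
  simp only [zero_add, one_smul, hF.eval_zero hd, hG.eval_zero hd, hG.eval_smul_s12] at hab hx
  linear_combination hx - s ^ d * hab

/-- If binary forms `F, G` of rank at least 3 satisfy `F + G = ∑ Hᵢ^d`, then the linear
forms `Hᵢ` span the whole 4-dimensional space of linear forms. -/
theorem stmt12 (d t : ℕ) (hd : 1 < d)
    (F G : MvPolynomial (Fin 2) ℂ)
    (hF : F.IsHomogeneous d) (hG : G.IsHomogeneous d)
    (hrF : 3 ≤ waringRank d F) (hrG : 3 ≤ waringRank d G)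
    (H : Fin t → MvPolynomial (Fin 2 ⊕ Fin 2) ℂ)
    (hH1 : ∀ i, (H i).IsHomogeneous 1)
    (hsum : rename (Sum.inl : Fin 2 → Fin 2 ⊕ Fin 2) F +
        rename (Sum.inr : Fin 2 → Fin 2 ⊕ Fin 2) G = ∑ i, (H i) ^ d) :
    ∀ j : Fin 2 ⊕ Fin 2,
      (X j : MvPolynomial (Fin 2 ⊕ Fin 2) ℂ) ∈ Submodule.span ℂ (Set.range H) := by
  have hd0 : d ≠ 0 := by omega
  intro j
  by_contra hj
  obtain ⟨f, hfj, hf⟩ := Submodule.exists_dual_map_eq_bot_of_notMem hj inferInstance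
  set a : Fin 2 → ℂ := fun k => f (X (.inl k))
  set b : Fin 2 → ℂ := fun k => f (X (.inr k))
  have hp : ∀ i, eval (Sum.elim a b) (H i) = 0 := fun i => by
    rw [show Sum.elim a b = fun k => f (X k) by ext (k | k) <;> rfl,
      (hH1 i).eval_eq_dual_of_degree_one]
    simpa using
      Submodule.map_le_iff_le_comap.1 hf.le (Submodule.subset_span (Set.mem_range_self i))
  have hinv : ∀ x y (s : ℂ), eval (x + s • a) F + eval (y + s • b) G = eval x F + eval y G := by
    intro x y s
    have := eval_sum_pow_add_smul_of_eval_eq_zero hH1 hp d (Sum.elim x y) s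
    rw [← hsum] at this
    simp only [map_add, eval_rename] at this
    exact this
  rcases j with j | j
  · have ha : a ≠ 0 := fun ha => hfj (congr_fun ha j)
    have := waringRank_le_two_of_eval_add_smul hd0 hF ha
      (eval_add_smul_of_eval_add_add hd0 hF hG hinv)
    omega
  · have hb : b ≠ 0 := fun hb => hfj (congr_fun hb j)
    have := waringRank_le_two_of_eval_add_smul hd0 hG hb
      (eval_add_smul_of_eval_add_add hd0 hG hF fun y x s => by rw [add_comm, hinv, add_comm])
    omega
end

section
/- Let P be a nonzero form of degree d over ℂ with rk(P) = t, and let P = H_1^d + ⋯ + H_t^d be a minimal Waring decomposition. Then at most d of the projective points [H_1],…,[H_t] lie on a line; equivalently, no 2-dimensional linear subspace of the space of linear forms contains d + 1 pairwise non-proportional forms among H_1,…,H_t. -/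
/-!
If `d + 1` of the `H i` lie in a plane spanned by linear forms `u, v`, the sum of their `d`-th
powers is a binary form of degree `d` in `u, v`. Over an algebraically closed field of
characteristic zero every such form is a sum of `d` powers `(α • u + β • v) ^ d` (Sylvester), so
replacing those summands shortens the decomposition, against minimality.

For the binary statement, dehomogenize to a polynomial `q` of degree `≤ d` and translate so that
`q 0 ≠ 0`. Then some `(X + b) ^ d - τ`, which has `d` distinct roots `v i`, is apolar to `q`, and a
functional on polynomials of degree `≤ d` killing `∏ (X - v i)` is a combination of the
evaluations at the `v i` (Lagrange interpolation). On monomials this reads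
`q = ∑ c i * (v i * X + 1) ^ d`.
-/

open MvPolynomial

open Finset

namespace Polynomial

variable {K : Type*} [Field K]

theorem coeff_linear_pow (a b : K) (n k : ℕ) :
    ((C a * X + C b) ^ n).coeff k = a ^ k * b ^ (n - k) * n.choose k := by
  have : (C a * X + C b) ^ n = ((X + C b) ^ n).comp (C a * X) := by
    simp [add_comp]
  rw [this, comp_C_mul_X_coeff, coeff_X_add_C_pow]
  ring

theorem exists_eq_sum_eval_of_map_nodal_eq_zero {ι : Type*} [Fintype ι] [DecidableEq ι]
    {v : ι → K} (hv : Function.Injective v) {φ : K[X] →ₗ[K] K}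
    (hφ : φ (Lagrange.nodal univ v) = 0) :
    ∃ c : ι → K, ∀ P : K[X], P.natDegree ≤ Fintype.card ι →
      φ P = ∑ i, c i * P.eval (v i) := by
  refine ⟨fun i => φ (Lagrange.basis univ v i), fun P hP => ?_⟩
  set p := Lagrange.nodal univ v
  have hp : p.Monic := Lagrange.nodal_monic
  have hp_deg : p.natDegree = Fintype.card ι := by simp [p, Lagrange.natDegree_nodal]
  have hquot : P /ₘ p = C ((P /ₘ p).coeff 0) :=
    eq_C_of_natDegree_eq_zero (by rw [natDegree_divByMonic P hp]; omega)
  have hrem : P %ₘ p = Lagrange.interpolate univ v (fun i => P.eval (v i)) := by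
    refine Lagrange.eq_interpolate_of_eval_eq _ hv.injOn ?_ fun i _ => ?_
    · rw [card_univ, ← hp_deg, ← degree_eq_natDegree hp.ne_zero]
      exact degree_modByMonic_lt P hp
    · rw [modByMonic_eq_sub_mul_div, eval_sub, eval_mul,
        Lagrange.eval_nodal_at_node (mem_univ i), zero_mul, sub_zero]
  calc φ P = φ (P %ₘ p + p * (P /ₘ p)) := by rw [modByMonic_add_div]
    _ = ∑ i, φ (Lagrange.basis univ v i) * P.eval (v i) := by
      rw [hrem, hquot, mul_comm, ← smul_eq_C_mul, map_add, map_smul, hφ, smul_zero, add_zero,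
        Lagrange.interpolate_apply, map_sum]
      refine sum_congr rfl fun i _ => ?_
      rw [← smul_eq_C_mul, map_smul, smul_eq_mul, mul_comm]

theorem eval_reflect {d : ℕ} {q : K[X]} (hq : q.natDegree ≤ d) (b : K) :
    (q.reflect d).eval b = ∑ k ∈ range (d + 1), q.coeff k * b ^ (d - k) := by
  rw [eval_eq_sum_range' (n := d + 1) (by have := natDegree_reflect_le (N := d) (p := q); omega),
    ← sum_range_reflect]
  refine sum_congr rfl fun k hk => ?_
  rw [mem_range] at hk
  rw [coeff_reflect, revAt_le (by omega)]
  congr 2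
  omega

section Homogenize

variable {A : Type*} [CommSemiring A] [Algebra K A]

-- Evaluation at `(u, v)` of the degree-`d` homogenization.
noncomputable def homogenizeEval (d : ℕ) (u v : A) : K[X] →ₗ[K] A :=
  ∑ k ∈ range (d + 1), (lcoeff K k).smulRight (u ^ k * v ^ (d - k))

theorem homogenizeEval_linear_pow (d : ℕ) (u v : A) (a b : K) :
    homogenizeEval d u v ((C a * X + C b) ^ d) = (a • u + b • v) ^ d := by
  simp only [homogenizeEval, LinearMap.sum_apply, LinearMap.smulRight_apply, lcoeff_apply,
    coeff_linear_pow]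
  rw [add_pow]
  refine sum_congr rfl fun k _ => ?_
  simp only [Algebra.smul_def, map_mul, map_pow, map_natCast]
  ring

end Homogenize

/- The apolarity pairing with `q`, seen as a binary form of degree `d`: the binomial weights make
`(C a * X + C b) ^ d` pair to the value of the form at `(a, b)` (`apolar_linear_pow`). -/
noncomputable def apolar (d : ℕ) (q : K[X]) : K[X] →ₗ[K] K :=
  ∑ k ∈ range (d + 1), (q.coeff k / d.choose k) • lcoeff K k

theorem apolar_apply (d : ℕ) (q P : K[X]) :
    apolar d q P = ∑ k ∈ range (d + 1), q.coeff k / d.choose k * P.coeff k := by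
  simp [apolar]

theorem apolar_X_pow {d k : ℕ} (hk : k ≤ d) (q : K[X]) :
    apolar d q (X ^ k) = q.coeff k / d.choose k := by
  rw [apolar_apply, sum_eq_single k] <;> simp +contextual [coeff_X_pow]
  omega

theorem apolar_C (d : ℕ) (q : K[X]) (τ : K) : apolar d q (C τ) = q.coeff 0 * τ := by
  rw [apolar_apply, sum_eq_single 0] <;> simp +contextual [coeff_C]

section

variable [CharZero K]

theorem apolar_linear_pow (d : ℕ) (q : K[X]) (a b : K) :
    apolar d q ((C a * X + C b) ^ d) = ∑ k ∈ range (d + 1), q.coeff k * a ^ k * b ^ (d - k) := by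
  rw [apolar_apply]
  refine sum_congr rfl fun k hk => ?_
  have : (d.choose k : K) ≠ 0 := by
    exact_mod_cast (Nat.choose_pos (Nat.lt_succ_iff.1 (mem_range.1 hk))).ne'
  rw [coeff_linear_pow]
  field_simp

variable [IsAlgClosed K]

theorem exists_injective_apolar_nodal_eq_zero {d : ℕ} (hd : 0 < d) {q : K[X]}
    (hq : q.natDegree ≤ d) (hq0 : q.coeff 0 ≠ 0) :
    ∃ v : Fin d → K, Function.Injective v ∧ apolar d q (Lagrange.nodal univ v) = 0 := by
  obtain ⟨b, hb⟩ : ∃ b, (q.reflect d).eval b ≠ 0 := by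
    by_contra! h
    exact hq0 (by rw [reflect_eq_zero_iff.1 (zero_of_eval_zero _ h), coeff_zero])
  set τ := (q.reflect d).eval b / q.coeff 0
  have hτ : τ ≠ 0 := div_ne_zero hb hq0
  obtain ⟨ω, hω⟩ := IsAlgClosed.exists_pow_nat_eq τ hd
  have hω0 : ω ≠ 0 := by rintro rfl; exact hτ (by rw [← hω, zero_pow hd.ne'])
  have : NeZero (d : K) := ⟨Nat.cast_ne_zero.2 hd.ne'⟩
  obtain ⟨ζ, hζ⟩ := IsAlgClosed.exists_root (cyclotomic d K) (degree_cyclotomic_pos d K hd).ne'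
  rw [isRoot_cyclotomic_iff] at hζ
  -- the roots of `(X + C b) ^ d - C τ`: `τ` makes it apolar to `q`, and `b` makes `τ ≠ 0`
  refine ⟨fun i => ζ ^ (i : ℕ) * ω - b, fun i j hij => ?_, ?_⟩
  · exact Fin.ext (hζ.pow_inj i.2 j.2 (mul_right_cancel₀ hω0 (sub_left_inj.1 hij)))
  have hnodal : Lagrange.nodal univ (fun i : Fin d => ζ ^ (i : ℕ) * ω - b) =
      (X + C b) ^ d - C τ := by
    have h := congrArg (·.comp (X + C b)) (X_pow_sub_C_eq_prod hζ hd hω)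
    simp only [sub_comp, pow_comp, X_comp, C_comp, prod_comp] at h
    rw [h, Lagrange.nodal, ← Fin.prod_univ_eq_prod_range (fun i => X + C b - C (ζ ^ i * ω))]
    refine prod_congr rfl fun i _ => ?_
    rw [map_sub]
    ring
  rw [hnodal, map_sub, apolar_C]
  have := apolar_linear_pow d q 1 b
  simp only [map_one, one_mul, one_pow, mul_one] at this
  rw [this, ← eval_reflect hq, mul_div_cancel₀ _ hq0, sub_self]

theorem exists_eq_sum_linear_pow_of_coeff_zero_ne_zero {d : ℕ} (hd : 0 < d) {q : K[X]}
    (hq : q.natDegree ≤ d) (hq0 : q.coeff 0 ≠ 0) :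
    ∃ α β : Fin d → K, q = ∑ i, (C (α i) * X + C (β i)) ^ d := by
  obtain ⟨v, hv, hnodal⟩ := exists_injective_apolar_nodal_eq_zero hd hq hq0
  obtain ⟨c, hc⟩ := exists_eq_sum_eval_of_map_nodal_eq_zero hv hnodal
  choose μ hμ using fun i => IsAlgClosed.exists_pow_nat_eq (c i) hd
  refine ⟨fun i => μ i * v i, μ, ext fun k => ?_⟩
  simp only [finsetSum_coeff, coeff_linear_pow]
  rcases le_or_gt k d with hk | hk
  · have hchoose : (d.choose k : K) ≠ 0 := by exact_mod_cast (Nat.choose_pos hk).ne'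
    have hmoment := hc (X ^ k) (by simpa using hk)
    rw [apolar_X_pow hk, div_eq_iff hchoose] at hmoment
    rw [hmoment, sum_mul]
    refine sum_congr rfl fun i _ => ?_
    rw [← hμ i, eval_X_pow, mul_pow, ← pow_mul_pow_sub (μ i) hk]
    ring
  · simp [coeff_eq_zero_of_natDegree_lt (hq.trans_lt hk), Nat.choose_eq_zero_of_lt hk]

theorem exists_eq_sum_linear_pow {d : ℕ} (hd : 0 < d) {q : K[X]} (hq : q.natDegree ≤ d) :
    ∃ α β : Fin d → K, q = ∑ i, (C (α i) * X + C (β i)) ^ d := by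
  rcases eq_or_ne q 0 with rfl | hq0
  · exact ⟨0, 0, by simp [zero_pow hd.ne']⟩
  obtain ⟨a, ha⟩ : ∃ a, q.eval a ≠ 0 := by
    by_contra! h
    exact hq0 (zero_of_eval_zero q h)
  obtain ⟨α, β, h⟩ := exists_eq_sum_linear_pow_of_coeff_zero_ne_zero hd
    (q := q.comp (X + C a)) (by simpa [natDegree_comp] using hq)
    (by simpa [coeff_zero_eq_eval_zero] using ha)
  refine ⟨α, fun i => β i - α i * a, ?_⟩
  have hcomp : q = (q.comp (X + C a)).comp (X - C a) := by simp [comp_assoc]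
  rw [hcomp, h, sum_comp]
  refine sum_congr rfl fun i _ => ?_
  simp only [pow_comp, add_comp, mul_comp, C_comp, X_comp, map_sub, map_mul]
  ring

end

end Polynomial

theorem exists_fin_sum_pow_eq_sum_smul_add_smul_pow {K A ι : Type*} [Field K] [CharZero K]
    [IsAlgClosed K] [CommSemiring A] [Algebra K A] {d : ℕ} (hd : 0 < d) (u v : A)
    (s : Finset ι) (a b : ι → K) :
    ∃ α β : Fin d → K, ∑ i ∈ s, (a i • u + b i • v) ^ d = ∑ m, (α m • u + β m • v) ^ d := by
  obtain ⟨α, β, h⟩ := Polynomial.exists_eq_sum_linear_pow hd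
    (q := ∑ i ∈ s, (Polynomial.C (a i) * Polynomial.X + Polynomial.C (b i)) ^ d)
    (Polynomial.natDegree_sum_le_of_forall_le _ _ fun i _ =>
      (Polynomial.natDegree_pow_le_of_le d Polynomial.natDegree_linear_le).trans_eq (mul_one d))
  refine ⟨α, β, ?_⟩
  have := congrArg (Polynomial.homogenizeEval d u v) h
  simpa only [map_sum, Polynomial.homogenizeEval_linear_pow] using this

namespace MvPolynomial

theorem exists_isHomogeneous_pair_of_finrank_eq_two {σ K : Type*} [Field K] {n : ℕ}
    {W : Submodule K (MvPolynomial σ K)} (hW : Module.finrank K W = 2) :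
    ∃ u v : MvPolynomial σ K, u.IsHomogeneous n ∧ v.IsHomogeneous n ∧
      ∀ w ∈ W, w.IsHomogeneous n → ∃ a b : K, w = a • u + b • v := by
  have : Module.Finite K W := Module.finite_of_finrank_eq_succ hW
  let B := Module.finBasisOfFinrankEq K W hW
  refine ⟨homogeneousComponent n (B 0 : MvPolynomial σ K),
    homogeneousComponent n (B 1 : MvPolynomial σ K),
    homogeneousComponent_isHomogeneous _ _, homogeneousComponent_isHomogeneous _ _,
    fun w hw hwn => ⟨B.repr ⟨w, hw⟩ 0, B.repr ⟨w, hw⟩ 1, ?_⟩⟩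
  have h := congrArg (fun x : W => homogeneousComponent n (x : MvPolynomial σ K))
    (B.sum_repr ⟨w, hw⟩)
  simp only [Fin.sum_univ_two, Submodule.coe_add, Submodule.coe_smul, map_add, map_smul] at h
  rw [h, homogeneousComponent_of_mem ((mem_homogeneousSubmodule n w).2 hwn), if_pos rfl]

theorem IsHomogeneous.smul_add_smul {σ R : Type*} [CommSemiring R] {n : ℕ}
    {u v : MvPolynomial σ R} (hu : u.IsHomogeneous n) (hv : v.IsHomogeneous n) (a b : R) :
    (a • u + b • v).IsHomogeneous n := by
  rw [smul_eq_C_mul, smul_eq_C_mul]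
  exact (hu.C_mul a).add (hv.C_mul b)

end MvPolynomial

theorem waringRank_le_card {σ ι : Type*} [Fintype ι] {d : ℕ} {P : MvPolynomial σ ℂ}
    (L : ι → MvPolynomial σ ℂ) (hL : ∀ i, (L i).IsHomogeneous 1) (hP : P = ∑ i, L i ^ d) :
    waringRank d P ≤ Fintype.card ι :=
  Nat.sInf_le ⟨L ∘ (Fintype.equivFin ι).symm, fun _ => hL _, by
    rw [hP]; exact (Equiv.sum_comp (Fintype.equivFin ι).symm (L · ^ d)).symm⟩

theorem waringRank_add_card_le {σ ι : Type*} [Fintype ι] [DecidableEq ι] {d r : ℕ}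
    {P : MvPolynomial σ ℂ} {H : ι → MvPolynomial σ ℂ} (hH : ∀ i, (H i).IsHomogeneous 1)
    (hP : P = ∑ i, H i ^ d) (S : Finset ι) (L : Fin r → MvPolynomial σ ℂ)
    (hL : ∀ j, (L j).IsHomogeneous 1) (hS : ∑ i ∈ S, H i ^ d = ∑ j, L j ^ d) :
    waringRank d P + #S ≤ Fintype.card ι + r := by
  have hrank := waringRank_le_card (Sum.elim (fun i : {i // i ∉ S} => H i) L)
    (Sum.forall.2 ⟨fun i => hH i, hL⟩) (d := d) (P := P) (by
      simp only [Fintype.sum_sum_type, Sum.elim_inl, Sum.elim_inr]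
      rw [hP, ← Fintype.sum_subtype_add_sum_subtype (· ∈ S) (H · ^ d), add_comm, ← hS]
      congr 1
      exact (sum_subtype S (fun _ => Iff.rfl) (H · ^ d)).symm)
  simp only [Fintype.card_sum, Fintype.card_subtype_compl, Fintype.card_coe,
    Fintype.card_fin] at hrank
  have := S.card_le_univ
  omega

theorem stmt13_general (N d t : ℕ) (hd : 0 < d)
    (P : MvPolynomial (Fin N) ℂ)
    (ht : waringRank d P = t)
    (H : Fin t → MvPolynomial (Fin N) ℂ) (hH1 : ∀ i, (H i).IsHomogeneous 1)
    (hdec : P = ∑ i, (H i) ^ d) :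
    ∀ S : Finset (Fin t),
      (∀ i ∈ S, ∀ j ∈ S, i ≠ j → ¬ ∃ c : ℂ, H i = c • H j) →
      (∃ W : Submodule ℂ (MvPolynomial (Fin N) ℂ),
        Module.finrank ℂ W = 2 ∧ ∀ i ∈ S, H i ∈ W) →
      S.card ≤ d := by
  rintro S - ⟨W, hW, hSW⟩
  obtain ⟨u, v, hu, hv, huv⟩ := exists_isHomogeneous_pair_of_finrank_eq_two (n := 1) hW
  choose! a b hab using fun i hi => huv (H i) (hSW i hi) (hH1 i)
  obtain ⟨α, β, hαβ⟩ := exists_fin_sum_pow_eq_sum_smul_add_smul_pow hd u v S a b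
  have hrank := waringRank_add_card_le hH1 hdec S _ (fun m => hu.smul_add_smul hv (α m) (β m))
    (by rw [← hαβ]; exact sum_congr rfl fun i hi => by rw [hab i hi])
  rw [ht, Fintype.card_fin] at hrank
  omega

/-- In a minimal Waring decomposition, no 2-dimensional space of linear forms contains
more than `d` pairwise non-proportional of the summands. -/
theorem stmt13 (N d t : ℕ) (hd : 0 < d)
    (P : MvPolynomial (Fin N) ℂ) (hP0 : P ≠ 0) (hP : P.IsHomogeneous d)
    (ht : waringRank d P = t)
    (H : Fin t → MvPolynomial (Fin N) ℂ) (hH1 : ∀ i, (H i).IsHomogeneous 1)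
    (hdec : P = ∑ i, (H i) ^ d) :
    ∀ S : Finset (Fin t),
      (∀ i ∈ S, ∀ j ∈ S, i ≠ j → ¬ ∃ c : ℂ, H i = c • H j) →
      (∃ W : Submodule ℂ (MvPolynomial (Fin N) ℂ),
        Module.finrank ℂ W = 2 ∧ ∀ i ∈ S, H i ∈ W) →
      S.card ≤ d :=
  stmt13_general N d t hd P ht H hH1 hdec
end
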